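/- arXiv:2307.15048 — 4 statements merged into one kernel-verified Lean document; each statement's English description precedes it below -/
import Mathlib

section
/- Every triangle-free graph G of maximum degree Δ ≥ 1 is ((1/6)·log₂ Δ)-IS-rich. -/
open Filter MeasureTheory

namespace RandomCorr

/-- A correspondence assignment for a graph `G`: a list assignment `L` together with,
for each edge, a partial matching between the colors of its endpoints,
encoded as a symmetric relation `M` supported on edges of `G`. -/
structure CorrAssignment {V : Type} (G : SimpleGraph V) where
  L : V → Finset ℕ
  M : V → ℕ → V → ℕ → Prop
  symm : ∀ u i v j, M u i v j → M v j u i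
  adj_of : ∀ u i v j, M u i v j → G.Adj u v
  mem_left : ∀ u i v j, M u i v j → i ∈ L u
  mem_right : ∀ u i v j, M u i v j → j ∈ L v
  matching : ∀ u i v j j', M u i v j → M u i v j' → j = j'

variable {V : Type}

/-- An `(L,M)`-coloring. -/
def CorrAssignment.IsColoring {G : SimpleGraph V} (C : CorrAssignment G) (φ : V → ℕ) : Prop :=
  (∀ v, φ v ∈ C.L v) ∧ ∀ u v, ¬ C.M u (φ u) v (φ v)

/-- `(L,M)` is an `ℓ`-correspondence assignment. -/
def IsLAssignment {G : SimpleGraph V} (C : CorrAssignment G) (ℓ : ℕ) : Prop :=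
  ∀ v, ℓ ≤ (C.L v).card

/-- The correspondence chromatic number of `G` is at most `ℓ`. -/
def corrChromAtMost (G : SimpleGraph V) (ℓ : ℕ) : Prop :=
  ∀ C : CorrAssignment G, IsLAssignment C ℓ → ∃ φ, C.IsColoring φ

/-- Maximum degree of a finite graph. -/
noncomputable def maxDeg [Fintype V] (G : SimpleGraph V) : ℕ :=
  Finset.univ.sup fun v => (G.neighborSet v).ncard

/-- `binom(n, ≤ b) = ∑_{i=0}^{⌊b⌋} binom(n,i)`. -/
noncomputable def binomLe (n : ℕ) (b : ℝ) : ℕ :=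
  ∑ i ∈ Finset.range (⌊b⌋₊ + 1), n.choose i

/-- The number of independent sets (including the empty set) of a subgraph `F`. -/
noncomputable def subIndepCount {W : Type} {H : SimpleGraph W} (F : H.Subgraph) : ℕ :=
  {S : Set W | S ⊆ F.verts ∧ ∀ a ∈ S, ∀ b ∈ S, ¬ F.Adj a b}.ncard

/-- A neighborhood subgraph: a subgraph whose vertex set is contained in the
neighborhood of some vertex. -/
def IsNbrSubgraph {W : Type} {H : SimpleGraph W} (F : H.Subgraph) : Prop :=
  ∃ v, F.verts ⊆ H.neighborSet v

/-- `G` is `b`-IS-rich (with respect to maximum degree `Δ`): every `b`-large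
neighborhood subgraph `F` satisfies `I(F) ≥ 2 · binom(|V(F)|, ≤ b)`. -/
def ISRich (G : SimpleGraph V) (b : ℝ) (Δ : ℕ) : Prop :=
  ∀ F : G.Subgraph, IsNbrSubgraph F →
    (Δ : ℝ) ^ ((1 : ℝ)/3) < (binomLe F.verts.ncard b : ℝ) →
    2 * binomLe F.verts.ncard b ≤ subIndepCount F

/-- The cover graph of a correspondence assignment. -/
def coverGraph {G : SimpleGraph V} (C : CorrAssignment G) : SimpleGraph (V × ℕ) where
  Adj x y := C.M x.1 x.2 y.1 y.2
  symm := ⟨fun x y h => C.symm _ _ _ _ h⟩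
  loopless := ⟨fun x h => (G.loopless.irrefl x.1) (C.adj_of _ _ _ _ h)⟩

/-- A correspondence assignment is `b`-IS-rich (with respect to `Δ`) if every `b`-large
neighborhood subgraph of its cover graph has at least `2 · binom(|V(F)|, ≤ b)`
independent sets. -/
def CorrAssignment.ISRich {G : SimpleGraph V} (C : CorrAssignment G) (b : ℝ) (Δ : ℕ) : Prop :=
  ∀ F : (coverGraph C).Subgraph, IsNbrSubgraph F →
    (Δ : ℝ) ^ ((1 : ℝ)/3) < (binomLe F.verts.ncard b : ℝ) →
    2 * binomLe F.verts.ncard b ≤ subIndepCount F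

/-- Bernoulli measure on `Bool` with success probability `p` (truncated to `[0,1]`). -/
noncomputable def bern (p : ℝ) : Measure Bool :=
  (PMF.bernoulli (min (Real.toNNReal p) 1) (min_le_right _ _)).toMeasure

/-- The Erdős–Rényi measure: each potential edge appears independently with
probability `p`. -/
noncomputable def erdosRenyi (n : ℕ) (p : ℝ) : Measure (Sym2 (Fin n) → Bool) :=
  Measure.pi fun _ => bern p

/-- The graph determined by an edge-indicator function. -/
def graphOf {n : ℕ} (ω : Sym2 (Fin n) → Bool) : SimpleGraph (Fin n) where
  Adj u v := u ≠ v ∧ ω s(u, v) = true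
  symm := by
    constructor
    intro u v h
    refine ⟨h.1.symm, ?_⟩
    rw [Sym2.eq_swap]
    exact h.2
  loopless := ⟨fun u h => h.1 rfl⟩

/-- `G` has a complete minor of order `k`. -/
def HasCompleteMinor (G : SimpleGraph V) (k : ℕ) : Prop :=
  ∃ B : Fin k → Set V,
    (∀ i, (B i).Nonempty) ∧
    (∀ i, (G.induce (B i)).Connected) ∧
    (∀ i j, i ≠ j → Disjoint (B i) (B j)) ∧
    (∀ i j, i ≠ j → ∃ u ∈ B i, ∃ v ∈ B j, G.Adj u v)

/-- The Hadwiger number: the largest `k` such that `K_k` is a minor of `G`. -/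
noncomputable def hadwigerNumber [Fintype V] (G : SimpleGraph V) : ℕ :=
  sSup {k | HasCompleteMinor G k}

/-- Independence number. -/
noncomputable def indepNum [Fintype V] (G : SimpleGraph V) : ℕ :=
  sSup {k | ∃ S : Finset V, S.card = k ∧ ∀ a ∈ S, ∀ b ∈ S, ¬ G.Adj a b}

/-- A partial `(L,M)`-coloring. -/
def IsPartialColoring {G : SimpleGraph V} (C : CorrAssignment G) (φ : V → Option ℕ) : Prop :=
  (∀ v c, φ v = some c → c ∈ C.L v) ∧
  ∀ u v cu cv, φ u = some cu → φ v = some cv → ¬ C.M u cu v cv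

/-- The number of colors available at `u` with respect to a partial coloring `φ`. -/
noncomputable def availCount {G : SimpleGraph V} (C : CorrAssignment G)
    (φ : V → Option ℕ) (u : V) : ℕ :=
  {c : ℕ | c ∈ C.L u ∧ ∀ v cv, φ v = some cv → ¬ C.M u c v cv}.ncard

/-- The event `A_u`: `u` is uncolored and fewer than `Δ^{7/12}` colors are available
at `u`. -/
def EventA {G : SimpleGraph V} (C : CorrAssignment G) (Δ : ℕ) (u : V)
    (φ : V → Option ℕ) : Prop :=
  φ u = none ∧ (availCount C φ u : ℝ) < (Δ : ℝ) ^ ((7 : ℝ)/12)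

/-- The number of independent sets of `F` of size at least `m`. -/
noncomputable def indepGeCount {W : Type} {H : SimpleGraph W} (F : H.Subgraph) (m : ℕ) : ℕ :=
  {S : Set W | S ⊆ F.verts ∧ (∀ a ∈ S, ∀ b ∈ S, ¬ F.Adj a b) ∧ m ≤ S.ncard}.ncard

/-- The median size `ᾱ(F)` of an independent set: the largest `m` such that at least
half of the independent sets of `F` have size at least `m`. -/
noncomputable def medianIndep {W : Type} {H : SimpleGraph W} (F : H.Subgraph) : ℕ :=
  sSup {m : ℕ | subIndepCount F ≤ 2 * indepGeCount F m}

end RandomCorr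

/-!
In a triangle-free graph every neighbourhood is an independent set, so a neighbourhood subgraph
`F` on `n` vertices has `I(F) = 2 ^ n`. If `F` is `b`-large for `b = (1/6) log₂ Δ`, then
`Δ^{1/3} < binom(n, ≤ b) ≤ 2 ^ n`, hence `2⌊b⌋ ≤ (1/3) log₂ Δ < n`. Below the middle the binomial
coefficients reflect onto disjoint coefficients above it, so `2 · binom(n, ≤ b) ≤ 2 ^ n`.
-/

open Finset

namespace RandomCorr

lemma binomLe_le_two_pow (n : ℕ) (b : ℝ) : binomLe n b ≤ 2 ^ n := by
  calc binomLe n b ≤ ∑ i ∈ range (n + 1), n.choose i := by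
        refine sum_le_sum_of_ne_zero fun i _ hi => mem_range.2 (Nat.lt_succ_of_le ?_)
        by_contra! hlt
        exact hi (Nat.choose_eq_zero_of_lt hlt)
    _ = 2 ^ n := Nat.sum_range_choose n

lemma two_mul_binomLe_le_two_pow {n : ℕ} {b : ℝ} (h : 2 * ⌊b⌋₊ < n) :
    2 * binomLe n b ≤ 2 ^ n := by
  set k := ⌊b⌋₊
  have hreflect : binomLe n b = ∑ i ∈ Ico (n - k) (n + 1), n.choose i := by
    calc binomLe n b = ∑ i ∈ Ico 0 (k + 1), n.choose (n - i) := by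
          rw [binomLe, Nat.Ico_zero_eq_range]
          exact sum_congr rfl fun i hi => (Nat.choose_symm (by grind)).symm
      _ = ∑ i ∈ Ico (n - k) (n + 1), n.choose i := by
          rw [sum_Ico_reflect _ _ (by omega)]
          congr 2; omega
  calc 2 * binomLe n b = binomLe n b + ∑ i ∈ Ico (n - k) (n + 1), n.choose i := by
        rw [← hreflect, two_mul]
    _ ≤ ∑ i ∈ range (n - k), n.choose i + ∑ i ∈ Ico (n - k) (n + 1), n.choose i := by
        gcongr
        exact sum_le_sum_of_subset (range_subset_range.2 (by omega : k + 1 ≤ n - k))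
    _ = 2 ^ n := by rw [sum_range_add_sum_Ico _ (by omega), Nat.sum_range_choose]

lemma two_mul_floor_logb_div_six_lt {x : ℝ} (hx : 1 ≤ x) {n : ℕ}
    (h : x ^ ((1 : ℝ) / 3) < 2 ^ n) : 2 * ⌊(1 / 6) * Real.logb 2 x⌋₊ < n := by
  have hx0 : 0 < x := by linarith
  have hb : 0 ≤ (1 / 6) * Real.logb 2 x := by
    have := Real.logb_nonneg one_lt_two hx
    positivity
  have hlog : Real.logb 2 (x ^ ((1 : ℝ) / 3)) < n := by
    rw [Real.logb_lt_iff_lt_rpow one_lt_two (Real.rpow_pos_of_pos hx0 _), Real.rpow_natCast]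
    exact h
  rw [Real.logb_rpow_eq_mul_logb_of_pos hx0] at hlog
  have hfloor := Nat.floor_le hb
  exact_mod_cast (by linarith : (2 * ⌊(1 / 6) * Real.logb 2 x⌋₊ : ℝ) < n)

lemma IsNbrSubgraph.not_adj_of_cliqueFree_three {W : Type} {H : SimpleGraph W}
    {F : H.Subgraph} (hF : IsNbrSubgraph F) (htf : H.CliqueFree 3) (a b : W) : ¬ F.Adj a b := by
  classical
  obtain ⟨v, hv⟩ := hF
  intro hab
  exact htf {v, a, b}
    (SimpleGraph.is3Clique_triple_iff.2 ⟨hv hab.fst_mem, hv hab.snd_mem, hab.adj_sub⟩)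

lemma subIndepCount_eq_two_pow {W : Type} {H : SimpleGraph W} {F : H.Subgraph}
    (hF : ∀ a b, ¬ F.Adj a b) (hfin : F.verts.Finite) :
    subIndepCount F = 2 ^ F.verts.ncard := by
  have hall : {S : Set W | S ⊆ F.verts ∧ ∀ a ∈ S, ∀ b ∈ S, ¬ F.Adj a b} = 𝒫 F.verts := by
    ext S
    simp [hF]
  rw [subIndepCount, hall, Set.ncard_powerset _ hfin]

end RandomCorr

theorem triangleFree_isRich_general
    (V : Type) (G : SimpleGraph V) (Δ : ℕ)
    (hΔ1 : 1 ≤ Δ) (htf : G.CliqueFree 3) :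
    RandomCorr.ISRich G ((1/6) * Real.logb 2 Δ) Δ := by
  intro F hF hlarge
  have hsmall : 2 * ⌊(1 / 6) * Real.logb 2 Δ⌋₊ < F.verts.ncard := by
    refine RandomCorr.two_mul_floor_logb_div_six_lt (by exact_mod_cast hΔ1) (hlarge.trans_le ?_)
    exact_mod_cast RandomCorr.binomLe_le_two_pow _ _
  rw [RandomCorr.subIndepCount_eq_two_pow (hF.not_adj_of_cliqueFree_three htf)
    (Set.finite_of_ncard_pos (by omega))]
  exact RandomCorr.two_mul_binomLe_le_two_pow hsmall

/-- Every triangle-free graph of maximum degree `Δ ≥ 1` is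
`((1/6)·log₂ Δ)`-IS-rich. -/
theorem triangleFree_isRich
    (V : Type) [Fintype V] (G : SimpleGraph V) (Δ : ℕ)
    (hΔ : RandomCorr.maxDeg G = Δ) (hΔ1 : 1 ≤ Δ) (htf : G.CliqueFree 3) :
    RandomCorr.ISRich G ((1/6) * Real.logb 2 Δ) Δ :=
  triangleFree_isRich_general V G Δ hΔ1 htf
end

section
/- For every fixed integer r ≥ 2 there exist a function b : ℕ → ℕ with b(Δ) = Θ(log Δ / (r · log log Δ)) and an integer Δ₀ such that every graph G of clique number at most r+1 and maximum degree Δ ≥ Δ₀ is b(Δ)-IS-rich. -/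
open Filter MeasureTheory

/-! The vertices of a neighbourhood subgraph `F` of a `K_{r+2}`-free graph span no `K_{r+1}`,
so (neighbourhoods being smaller by induction, and a maximum independent set dominating) its
`n` vertices contain an independent set of size `α` with `n < (α + 1) ^ r`; all `2 ^ α` subsets of
it are independent in `F`. On the other hand `binom(n, ≤ b) ≤ (n + 1) ^ b`, and for
`b = ⌊log Δ / (12 r log log Δ)⌋` largeness forces `log (n + 1) > 4 r log log Δ`, whence
`α + 1 ≥ (n + 1) ^ (1 / r) ≥ 12 b log (n + 1)` and so `2 ^ α ≥ 2 (n + 1) ^ b`. -/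

open Finset RandomCorr

namespace SimpleGraph

variable {α : Type*} (G : SimpleGraph α)

theorem exists_isIndepSet_subset_forall_card_le (s : Finset α) :
    ∃ t ⊆ s, G.IsIndepSet t ∧ ∀ u ⊆ s, G.IsIndepSet u → #u ≤ #t := by
  classical
  obtain ⟨t, ht, hmax⟩ :=
    (s.powerset.filter fun u : Finset α => G.IsIndepSet ↑u).exists_max_image card ⟨∅, by simp⟩
  simp only [mem_filter, mem_powerset] at ht hmax
  exact ⟨t, ht.1, ht.2, fun u hu hind => hmax u ⟨hu, hind⟩⟩

variable {G} [DecidableRel G.Adj]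

/-- A maximum independent set dominates `s`, so `s` is covered by the closed neighbourhoods
of at most `m` vertices. -/
theorem card_le_mul_of_forall_isIndepSet_card_le (s : Finset α) {D m : ℕ}
    (hD : ∀ a ∈ s, #{b ∈ s | G.Adj a b} ≤ D)
    (hm : ∀ t ⊆ s, G.IsIndepSet t → #t ≤ m) : #s ≤ m * (D + 1) := by
  classical
  obtain ⟨t, hts, hind, hmax⟩ := G.exists_isIndepSet_subset_forall_card_le s
  have hcover : s ⊆ t.biUnion fun a => insert a {b ∈ s | G.Adj a b} := by
    intro b hb
    by_contra hnot
    simp only [mem_biUnion, mem_insert, mem_filter, not_exists, not_and] at hnot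
    have hbt : b ∉ t := fun h => hnot b h (Or.inl rfl)
    have hins : G.IsIndepSet ↑(insert b t) := by
      rw [coe_insert]
      exact hind.insert fun a ha _ =>
        ⟨fun hab => hnot a ha (Or.inr ⟨hb, hab.symm⟩), fun hab => hnot a ha (Or.inr ⟨hb, hab⟩)⟩
    have := hmax _ (insert_subset hb hts) hins
    rw [card_insert_of_notMem hbt] at this
    omega
  calc #s ≤ ∑ a ∈ t, #(insert a {b ∈ s | G.Adj a b}) := (card_le_card hcover).trans card_biUnion_le
    _ ≤ ∑ _a ∈ t, (D + 1) := sum_le_sum fun a ha => (card_insert_le _ _).trans (by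
        have := hD a (hts ha); omega)
    _ ≤ m * (D + 1) := by rw [sum_const, smul_eq_mul]; exact Nat.mul_le_mul_right _ (hm t hts hind)

theorem card_lt_pow_of_cliqueFreeOn {k m : ℕ} (s : Finset α) (hs : G.CliqueFreeOn s (k + 1))
    (hm : ∀ t ⊆ s, G.IsIndepSet t → #t ≤ m) : #s < (m + 1) ^ k := by
  induction k generalizing s with
  | zero =>
    have : s = ∅ := eq_empty_of_forall_notMem fun a ha =>
      ((cliqueFreeOn_singleton G).1 (hs.subset G (by simpa using ha))).false
    simp [this]
  | succ k ih =>
    have hnbr : ∀ a ∈ s, #{b ∈ s | G.Adj a b} < (m + 1) ^ k := fun a ha =>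
      ih _ (by simpa [Set.inter_def] using hs.of_succ G ha)
        fun t ht => hm t (ht.trans (filter_subset _ _))
    have hpos : 0 < (m + 1) ^ k := by positivity
    calc #s ≤ m * ((m + 1) ^ k - 1 + 1) :=
          card_le_mul_of_forall_isIndepSet_card_le s (fun a ha => by have := hnbr a ha; omega) hm
      _ < (m + 1) ^ (k + 1) := by rw [Nat.sub_add_cancel hpos, pow_succ]; nlinarith

end SimpleGraph

namespace RandomCorr

open Real

theorem binomLe_natCast_le_pow (n B : ℕ) : binomLe n B ≤ (n + 1) ^ B := by
  rw [binomLe, Nat.floor_natCast, add_pow]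
  refine sum_le_sum fun i hi => ?_
  rw [one_pow, mul_one]
  exact (Nat.choose_le_pow n i).trans
    (Nat.le_mul_of_pos_right _ (Nat.choose_pos (Nat.lt_succ_iff.1 (mem_range.1 hi))))

theorem two_pow_card_le_subIndepCount {W : Type} {H : SimpleGraph W} (F : H.Subgraph)
    (hF : F.verts.Finite) (t : Finset W) (ht : ↑t ⊆ F.verts) (hind : H.IsIndepSet t) :
    2 ^ #t ≤ subIndepCount F := by
  rw [← card_powerset, ← Set.ncard_coe_finset, ← Set.ncard_image_of_injective _ coe_injective]
  refine Set.ncard_le_ncard ?_ (hF.finite_subsets.subset fun S hS => hS.1)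
  rintro _ ⟨u, hu, rfl⟩
  rw [mem_coe, mem_powerset] at hu
  exact ⟨(coe_subset.2 hu).trans ht, fun a ha b hb hab =>
    (hind.mono (coe_subset.2 hu)) ha hb (F.adj_sub hab).ne (F.adj_sub hab)⟩

theorem two_mul_pow_le_two_pow {x : ℝ} (hx : 1 ≤ x) {B m : ℕ} (h : 1 + 2 * B * log x ≤ m) :
    2 * x ^ B ≤ 2 ^ m := by
  rw [← exp_log (by positivity : 0 < 2 * x ^ B), ← exp_log (by positivity : (0 : ℝ) < 2 ^ m),
    exp_le_exp, log_mul two_ne_zero (by positivity), log_pow, log_pow]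
  have h2 : (0 : ℝ) ≤ 2 * log 2 - 1 := by linarith [log_two_gt_d9]
  nlinarith [mul_le_mul_of_nonneg_right h (log_nonneg one_le_two),
    mul_nonneg (mul_nonneg (Nat.cast_nonneg B) (log_nonneg hx)) h2]

theorem twelve_mul_le_exp_div {L y : ℝ} {B r : ℕ} (hr : 0 < r) (hL : 2 ≤ log L)
    (hB : 12 * r * log L * B ≤ L) (hy : L < 3 * B * y) : 12 * B * y ≤ exp (y / r) := by
  have hr' : (0 : ℝ) < r := by exact_mod_cast hr
  have hLpos : 0 < L := lt_of_le_of_ne (le_trans (by positivity) hB)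
    (by rintro rfl; norm_num at hL)
  have hBpos : (0 : ℝ) < B := by
    rcases (Nat.cast_nonneg B : (0 : ℝ) ≤ B).eq_or_lt with h | h
    · rw [← h] at hy; linarith
    · exact h
  have hy4 : 4 * r * log L < y := by nlinarith
  set z := y / (2 * r) with hz
  have hzL : log L ≤ z := by rw [hz, le_div_iff₀ (by positivity)]; nlinarith
  have hLz : L ≤ exp z := (exp_log hLpos).symm.le.trans (exp_le_exp.2 hzL)
  have hzz : z ≤ exp z := by linarith [add_one_le_exp z]
  calc 12 * B * y ≤ 6 * log L * B * y := by nlinarith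
    _ = 12 * r * log L * B * z := by rw [hz]; field_simp; ring
    _ ≤ L * z := mul_le_mul_of_nonneg_right hB (by linarith)
    _ ≤ exp z * exp z := mul_le_mul hLz hzz (by linarith) (exp_pos z).le
    _ = exp (y / r) := by rw [← exp_add, hz]; congr 1; field_simp; ring

noncomputable def richBound (r Δ : ℕ) : ℕ :=
  ⌊Real.log Δ / (12 * r * Real.log (Real.log Δ))⌋₊

theorem tendsto_log_log_natCast_atTop :
    Tendsto (fun Δ : ℕ => log (log Δ)) atTop atTop :=
  tendsto_log_atTop.comp (tendsto_log_atTop.comp tendsto_natCast_atTop_atTop)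

theorem eventually_richBound_bounds {r : ℕ} (hr : 0 < r) :
    ∀ᶠ Δ : ℕ in atTop,
      1 / 24 * (log Δ / (r * log (log Δ))) ≤ (richBound r Δ : ℝ) ∧
      (richBound r Δ : ℝ) ≤ 1 / 12 * (log Δ / (r * log (log Δ))) := by
  have hr' : (0 : ℝ) < r := by exact_mod_cast hr
  have hL := tendsto_log_atTop.comp (tendsto_natCast_atTop_atTop (R := ℝ))
  filter_upwards [tendsto_log_log_natCast_atTop.eventually_gt_atTop 0,
    hL.eventually (isLittleO_log_id_atTop.bound (by positivity : (0 : ℝ) < 1 / (24 * r)))]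
    with Δ hLL hsmall
  simp only [Function.comp_apply, id, norm_of_nonneg (log_natCast_nonneg Δ),
    norm_of_nonneg hLL.le] at hsmall
  set q := log Δ / (12 * r * log (log Δ))
  have hq : 2 ≤ q := by
    rw [le_div_iff₀ (by positivity)]
    rw [div_mul_eq_mul_div, le_div_iff₀ (by positivity)] at hsmall
    linarith
  have hfloor : q - 1 < richBound r Δ := Nat.sub_one_lt_floor q
  have hceil : (richBound r Δ : ℝ) ≤ q := Nat.floor_le (by positivity)
  have h12 : 1 / 12 * (log Δ / (r * log (log Δ))) = q := by
    simp only [q]; field_simp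
  constructor <;> linarith

theorem two_mul_pow_richBound_le_two_pow {r Δ n m : ℕ} (hr : 0 < r) (hΔ : 2 ≤ log (log Δ))
    (hlarge : (Δ : ℝ) ^ ((1 : ℝ) / 3) < ((n + 1) ^ richBound r Δ : ℕ))
    (hn : n < (m + 1) ^ r) : 2 * (n + 1) ^ richBound r Δ ≤ 2 ^ m := by
  set B := richBound r Δ
  set L := log Δ with hLdef
  set y := log (n + 1 : ℝ)
  have hLne : L ≠ 0 := by rintro h; rw [h, log_zero] at hΔ; norm_num at hΔ
  have hLpos : 0 < L := lt_of_le_of_ne (log_natCast_nonneg Δ) hLne.symm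
  have hL3 : 3 ≤ L := by linarith [log_le_sub_one_of_pos hLpos]
  have hΔpos : (0 : ℝ) < Δ := Nat.cast_pos.2 (Nat.pos_of_ne_zero fun h => hLne (by simp [hLdef, h]))
  have hy : L < 3 * B * y := by
    have := log_lt_log (rpow_pos_of_pos hΔpos _) hlarge
    rw [log_rpow hΔpos, Nat.cast_pow, log_pow] at this
    push_cast at this
    linarith
  have hB : 12 * r * log L * B ≤ L := by
    have hq : (B : ℝ) ≤ L / (12 * r * log L) := Nat.floor_le (by positivity)
    rwa [le_div_iff₀ (by positivity), mul_comm] at hq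
  have hexp : exp (y / r) ≤ m + 1 := by
    have hnm : (n + 1 : ℝ) ≤ (m + 1) ^ r := by exact_mod_cast hn
    have := log_le_log (by positivity) hnm
    rw [log_pow] at this
    rw [← exp_log (by positivity : (0 : ℝ) < m + 1), exp_le_exp,
      div_le_iff₀ (by exact_mod_cast hr)]
    linarith
  have := twelve_mul_le_exp_div hr hΔ hB hy
  exact_mod_cast two_mul_pow_le_two_pow (x := n + 1) (by simp) (B := B) (m := m) (by linarith)

end RandomCorr

/-- For every fixed `r ≥ 2` there are `b : ℕ → ℕ` with
`b(Δ) = Θ(log Δ / (r·log log Δ))` and `Δ₀` such that every graph of clique number at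
most `r+1` and maximum degree `Δ ≥ Δ₀` is `b(Δ)`-IS-rich. -/
theorem cliqueFree_graph_isRich (r : ℕ) (hr : 2 ≤ r) :
    ∃ b : ℕ → ℕ,
      (∃ c₁ c₂ : ℝ, 0 < c₁ ∧ 0 < c₂ ∧ ∀ᶠ Δ : ℕ in Filter.atTop,
        c₁ * (Real.log Δ / (r * Real.log (Real.log Δ))) ≤ (b Δ : ℝ) ∧
        (b Δ : ℝ) ≤ c₂ * (Real.log Δ / (r * Real.log (Real.log Δ)))) ∧
      ∃ Δ₀ : ℕ, ∀ (V : Type) [Fintype V] (G : SimpleGraph V) (Δ : ℕ),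
        RandomCorr.maxDeg G = Δ → Δ₀ ≤ Δ → G.CliqueFree (r + 2) →
        RandomCorr.ISRich G (b Δ : ℝ) Δ := by
  obtain ⟨Δ₀, hΔ₀⟩ := eventually_atTop.1 (tendsto_log_log_natCast_atTop.eventually_ge_atTop 2)
  refine ⟨richBound r, ⟨1 / 24, 1 / 12, by norm_num, by norm_num,
    eventually_richBound_bounds (by omega)⟩, Δ₀, ?_⟩
  intro V _ G Δ _ hΔ hG F ⟨v, hv⟩ hlarge
  classical
  obtain ⟨t, ht, hind, hmax⟩ := G.exists_isIndepSet_subset_forall_card_le F.verts.toFinset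
  have hfree : G.CliqueFreeOn F.verts.toFinset (r + 1) :=
    ((hG.cliqueFreeOn (s := Set.univ)).of_succ G (Set.mem_univ v)).subset G (by simpa using hv)
  have hn : F.verts.ncard < (#t + 1) ^ r := by
    rw [Set.ncard_eq_toFinset_card']
    exact SimpleGraph.card_lt_pow_of_cliqueFreeOn _ hfree hmax
  calc 2 * binomLe F.verts.ncard (richBound r Δ) ≤ 2 * (F.verts.ncard + 1) ^ richBound r Δ :=
        Nat.mul_le_mul_left 2 (binomLe_natCast_le_pow _ _)
    _ ≤ 2 ^ #t := two_mul_pow_richBound_le_two_pow (by omega) (hΔ₀ Δ hΔ)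
        (hlarge.trans_le (by exact_mod_cast binomLe_natCast_le_pow _ _)) hn
    _ ≤ subIndepCount F := two_pow_card_le_subIndepCount F (Set.toFinite _) t
        (by simpa using ht) hind
end

section
/- For every function b : ℕ → ℝ with b(Δ) > 0 for all Δ and b(Δ) ≤ Δ^{o(1)} (i.e., for every ε > 0 there exists Δ_ε such that b(Δ) ≤ Δ^ε for all Δ ≥ Δ_ε), the following holds for every sufficiently large Δ. Let H be a graph of maximum degree at most Δ, let ℓ ≥ 5Δ/b(Δ) be an even integer, and let (L,M) be a correspondence assignment for H that is b(Δ)-IS-rich with respect to Δ. Let u ∈ V(H) be a vertex adjacent to all other vertices of H with |L(u)| = ℓ. If φ is a partial (L,M)-coloring of H with u ∉ dom(φ) chosen uniformly at random, then the probability that fewer than Δ^{7/12} colors of L(u) are available at u with respect to φ is less than 1/(8Δ³). -/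
open Filter MeasureTheory

/-!
Let `Ω` be the set of partial colorings with `u` uncolored. The blockers of a color `c` are the
colored cover vertices adjacent to `(u, c)`. Uncoloring them makes `c` available, and over a
coloring `ψ` in which `c` is available the colorings sent to `ψ` correspond to the independent sets
of candidate blockers. A blocked color is light if it has at most `b` blockers and heavy otherwise;
blockers of distinct colors are distinct neighbours of `u`, so at most `Δ/(b+1)` colors are heavy.
A light color is thin if its candidates span at most `Δ^{1/3}` sets of size at most `b`, and rich
otherwise; for rich colors IS-richness yields more large than small independent candidate sets.

Let `D(t, m)` be the set of colorings with at most `t` available and at least `m` heavy colors.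
Since `ℓ` is large, a coloring in `D(t, m)` has many thin or many rich light colors. Double
counting along the uncoloring maps sends the thin case to `D(t+1, m)`, and, after trading small
blocker sets for large ones, the rich case to `D(t, m+1)`, so that
`3|D(t, m)| ≤ |D(t+1, m)| + |D(t, m+1)|`. Iterating from `t = ⌈Δ^{7/12}⌉` up to `2t` gives
`|D(t, 0)| ≤ (2/3)^t |Ω| < |Ω|/(8Δ³)`.
-/

namespace RandomCorr

open Finset

lemma card_le_card_of_forall_card_fiber_le {α γ : Type*} [DecidableEq γ] {s t : Finset α}
    (f : α → γ) (h : ∀ z ∈ s.image f, #{x ∈ s | f x = z} ≤ #{x ∈ t | f x = z}) : #s ≤ #t :=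
  calc #s = ∑ z ∈ s.image f, #{x ∈ s | f x = z} := card_eq_sum_card_image f s
    _ ≤ ∑ z ∈ s.image f, #{x ∈ t | f x = z} := sum_le_sum h
    _ = #{x ∈ t | f x ∈ s.image f} := sum_card_fiberwise_eq_card_filter _ _ _
    _ ≤ #t := card_filter_le _ _

lemma sum_card_eq_sum_card_filter_mem {α β : Type*} [DecidableEq β] {s : Finset α}
    {t : Finset β} {F : α → Finset β} (hF : ∀ a ∈ s, F a ⊆ t) :
    ∑ a ∈ s, #(F a) = ∑ x ∈ t, #{a ∈ s | x ∈ F a} := by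
  calc ∑ a ∈ s, #(F a) = ∑ a ∈ s, #(t.bipartiteAbove (fun a x => x ∈ F a) a) :=
        sum_congr rfl fun a ha => by
          rw [bipartiteAbove, filter_mem_eq_inter, inter_eq_right.2 (hF a ha)]
    _ = _ := sum_card_bipartiteAbove_eq_sum_card_bipartiteBelow _

lemma three_mul_le_of_mul_le {x y w s : ℕ} (hs : 3 * w < s) (h : x * s ≤ y * w) : 3 * x ≤ y := by
  nlinarith

lemma ncard_setOf_subset_ncard_le {α : Type*} {X : Set α} (hX : X.Finite) (m : ℕ) :
    {S | S ⊆ X ∧ S.ncard ≤ m}.ncard ≤ ∑ i ∈ range (m + 1), X.ncard.choose i := by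
  induction m with
  | zero => simp_rw [Nat.le_zero, Set.ncard_powerset_ncard hX, zero_add, sum_range_one, le_refl]
  | succ m ih =>
    have hsplit : {S | S ⊆ X ∧ S.ncard ≤ m + 1} ⊆
        {S | S ⊆ X ∧ S.ncard ≤ m} ∪ {S | S ⊆ X ∧ S.ncard = m + 1} := by
      rintro S ⟨hS, hm⟩
      rcases Nat.lt_or_eq_of_le hm with h | h
      exacts [.inl ⟨hS, by omega⟩, .inr ⟨hS, h⟩]
    calc _ ≤ _ := Set.ncard_le_ncard hsplit
          ((hX.finite_subsets.subset fun _ h => h.1).union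
            (hX.finite_subsets.subset fun _ h => h.1))
      _ ≤ _ := Set.ncard_union_le _ _
      _ ≤ _ := by rw [Set.ncard_powerset_ncard hX, sum_range_succ]; omega

lemma ncard_setOf_nonempty_subset_add_one_le {α : Type*} {X : Set α} (hX : X.Finite) (b : ℝ) :
    {S | S ⊆ X ∧ S.Nonempty ∧ S.ncard ≤ ⌊b⌋₊}.ncard + 1 ≤ binomLe X.ncard b := by
  have hsub : insert ∅ {S | S ⊆ X ∧ S.Nonempty ∧ S.ncard ≤ ⌊b⌋₊} ⊆
      {S | S ⊆ X ∧ S.ncard ≤ ⌊b⌋₊} := by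
    rintro S (rfl | ⟨hS, -, hm⟩)
    exacts [⟨Set.empty_subset X, by simp⟩, ⟨hS, hm⟩]
  have hfin := hX.finite_subsets.subset fun S (h : S ⊆ X ∧ S.ncard ≤ ⌊b⌋₊) => h.1
  rw [← Set.ncard_insert_of_notMem (fun h => h.2.1.ne_empty rfl) (hfin.subset
    ((Set.subset_insert _ _).trans hsub))]
  exact (Set.ncard_le_ncard hsub hfin).trans (ncard_setOf_subset_ncard_le hX _)

/-- The large independent sets number at least `I(X) - binom(|X|, ≤ b) ≥ binom(|X|, ≤ b)`, the
nonempty small ones fewer than `binom(|X|, ≤ b)`. -/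
lemma ncard_small_indepSets_lt {V : Type} {H : SimpleGraph V} {C : CorrAssignment H} {b : ℝ}
    {Δ : ℕ} (hrich : C.ISRich b Δ) {X : Set (V × ℕ)} (hX : X.Finite) {x : V × ℕ}
    (hXx : X ⊆ (coverGraph C).neighborSet x)
    (hbig : (Δ : ℝ) ^ ((1 : ℝ) / 3) < binomLe X.ncard b) :
    {S | S ⊆ X ∧ (coverGraph C).IsIndepSet S ∧ S.Nonempty ∧ S.ncard ≤ ⌊b⌋₊}.ncard <
      {S | S ⊆ X ∧ (coverGraph C).IsIndepSet S ∧ ⌊b⌋₊ + 1 ≤ S.ncard}.ncard := by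
  set G := coverGraph C
  have hI : subIndepCount ((⊤ : G.Subgraph).induce X) = {S | S ⊆ X ∧ G.IsIndepSet S}.ncard := by
    rw [subIndepCount]
    congr 1
    ext S
    simp only [SimpleGraph.Subgraph.induce_verts, SimpleGraph.Subgraph.induce_adj,
      SimpleGraph.Subgraph.top_adj, Set.mem_ofPred_eq, SimpleGraph.isIndepSet_iff]
    exact and_congr_right fun hS =>
      ⟨fun h x hx y hy _ hxy => h x hx y hy ⟨hS hx, hS hy, hxy⟩, fun h x hx y hy hxy => by
        rcases eq_or_ne x y with rfl | hne
        exacts [G.loopless.irrefl x hxy.2.2, h hx hy hne hxy.2.2]⟩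
  have hrich' := hrich ((⊤ : G.Subgraph).induce X) ⟨x, hXx⟩ hbig
  rw [hI, SimpleGraph.Subgraph.induce_verts] at hrich'
  have hsmall := ncard_setOf_nonempty_subset_add_one_le hX b
  have hsplit : {S | S ⊆ X ∧ G.IsIndepSet S} ⊆ insert ∅
      ({S | S ⊆ X ∧ G.IsIndepSet S ∧ S.Nonempty ∧ S.ncard ≤ ⌊b⌋₊} ∪
        {S | S ⊆ X ∧ G.IsIndepSet S ∧ ⌊b⌋₊ + 1 ≤ S.ncard}) := by
    rintro S ⟨hS, hSI⟩
    rcases S.eq_empty_or_nonempty with rfl | hne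
    · exact Set.mem_insert _ _
    · rcases le_or_gt S.ncard ⌊b⌋₊ with h | h
      exacts [.inr (.inl ⟨hS, hSI, hne, h⟩), .inr (.inr ⟨hS, hSI, h⟩)]
  have hfin : {S | S ⊆ X}.Finite := hX.finite_subsets
  have hlight : {S | S ⊆ X ∧ G.IsIndepSet S ∧ S.Nonempty ∧ S.ncard ≤ ⌊b⌋₊}.ncard ≤
      {S | S ⊆ X ∧ S.Nonempty ∧ S.ncard ≤ ⌊b⌋₊}.ncard :=
    Set.ncard_le_ncard (fun S h => ⟨h.1, h.2.2⟩) (hfin.subset fun _ h => h.1)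
  have hfin' : (insert ∅ ({S | S ⊆ X ∧ G.IsIndepSet S ∧ S.Nonempty ∧ S.ncard ≤ ⌊b⌋₊} ∪
      {S | S ⊆ X ∧ G.IsIndepSet S ∧ ⌊b⌋₊ + 1 ≤ S.ncard})).Finite :=
    (hfin.subset fun S h => h.elim (fun h => h.1) (fun h => h.1)).insert _
  have := (Set.ncard_le_ncard hsplit hfin').trans
    ((Set.ncard_insert_le _ _).trans (Nat.add_le_add_right (Set.ncard_union_le _ _) 1))
  omega

lemma pow_seven_div_le_three_halves_pow (t : ℕ) : ((t : ℝ) / 14) ^ 7 ≤ (3 / 2) ^ t := by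
  have hblock : (t : ℝ) / 14 ≤ (3 / 2) ^ (t / 7) := by
    have := one_add_mul_le_pow (a := (1 / 2 : ℝ)) (by norm_num) (t / 7)
    have : (t : ℝ) ≤ 7 * (t / 7 : ℕ) + 6 := by exact_mod_cast (by omega : t ≤ 7 * (t / 7) + 6)
    norm_num at *
    linarith
  calc ((t : ℝ) / 14) ^ 7 ≤ ((3 / 2) ^ (t / 7)) ^ 7 := by gcongr
    _ = (3 / 2) ^ (7 * (t / 7)) := by rw [← pow_mul, mul_comm]
    _ ≤ (3 / 2) ^ t := pow_le_pow_right₀ (by norm_num) (Nat.mul_div_le t 7)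

section Recoloring

variable {V : Type} {H : SimpleGraph V} (C : CorrAssignment H) (u : V)

def blockers (c : ℕ) (φ : V → Option ℕ) : Set (V × ℕ) :=
  {x | φ x.1 = some x.2 ∧ C.M u c x.1 x.2}

open Classical in
noncomputable def availColors (φ : V → Option ℕ) : Finset ℕ :=
  {c ∈ C.L u | ∀ v cv, φ v = some cv → ¬ C.M u c v cv}

open Classical in
noncomputable def heavyColors (k : ℕ) (φ : V → Option ℕ) : Finset ℕ :=
  {c ∈ C.L u | k ≤ (blockers C u c φ).ncard}

open Classical in
noncomputable def lightColors (n : ℕ) (φ : V → Option ℕ) : Finset ℕ :=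
  {c ∈ C.L u | (blockers C u c φ).Nonempty ∧ (blockers C u c φ).ncard ≤ n}

open Classical in
noncomputable def uncolor (c : ℕ) (φ : V → Option ℕ) : V → Option ℕ :=
  fun v => if ∃ j, (v, j) ∈ blockers C u c φ then none else φ v

/-- The cover vertices that could block `c` at `u` once added to the partial coloring `ψ`. -/
def candidates (c : ℕ) (ψ : V → Option ℕ) : Set (V × ℕ) :=
  {x | ψ x.1 = none ∧ x.2 ∈ C.L x.1 ∧ C.M u c x.1 x.2 ∧
    ∀ v j, ψ v = some j → ¬ C.M x.1 x.2 v j}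

open Classical in
noncomputable def recolor (ψ : V → Option ℕ) (S : Set (V × ℕ)) : V → Option ℕ :=
  fun v => if h : ∃ j, (v, j) ∈ S then some h.choose else ψ v

variable {C u} {c c' : ℕ} {φ ψ : V → Option ℕ} {S : Set (V × ℕ)} {v : V} {j : ℕ}

lemma eq_of_adj_of_adj (h : C.M u c v j) (h' : C.M u c' v j) : c = c' :=
  C.matching v j u c c' (C.symm _ _ _ _ h) (C.symm _ _ _ _ h')

lemma not_adj_self (x : V × ℕ) : ¬ C.M x.1 x.2 x.1 x.2 :=
  fun h => H.loopless.irrefl x.1 (C.adj_of _ _ _ _ h)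

lemma mem_availColors : c ∈ availColors C u φ ↔ c ∈ C.L u ∧ blockers C u c φ = ∅ := by
  simp [availColors, blockers, Set.eq_empty_iff_forall_notMem]

lemma availCount_eq_card : availCount C φ u = #(availColors C u φ) := by
  rw [availCount, ← Set.ncard_coe_finset, availColors, coe_filter]

lemma mem_heavyColors {k : ℕ} :
    c ∈ heavyColors C u k φ ↔ c ∈ C.L u ∧ k ≤ (blockers C u c φ).ncard := by
  rw [heavyColors, mem_filter]

lemma mem_lightColors {n : ℕ} : c ∈ lightColors C u n φ ↔
    c ∈ C.L u ∧ (blockers C u c φ).Nonempty ∧ (blockers C u c φ).ncard ≤ n := by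
  simp only [lightColors, mem_filter]

lemma uncolor_of_mem (h : (v, j) ∈ blockers C u c φ) : uncolor C u c φ v = none :=
  if_pos ⟨j, h⟩

lemma uncolor_of_forall_notMem (h : ∀ j, (v, j) ∉ blockers C u c φ) :
    uncolor C u c φ v = φ v :=
  if_neg (not_exists.2 h)

lemma uncolor_eq_none (h : φ v = none) : uncolor C u c φ v = none := by
  unfold uncolor; split_ifs <;> simp [h]

lemma uncolor_eq_some : uncolor C u c φ v = some j ↔ φ v = some j ∧ ¬ C.M u c v j := by
  by_cases hex : ∃ j', (v, j') ∈ blockers C u c φ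
  · obtain ⟨j', hφ, hM⟩ := hex
    rw [uncolor_of_mem ⟨hφ, hM⟩, hφ, Option.some_inj]
    exact ⟨nofun, fun ⟨h, h'⟩ => absurd (h ▸ hM) h'⟩
  · push Not at hex
    rw [uncolor_of_forall_notMem hex]
    exact ⟨fun hj => ⟨hj, fun hM => hex j ⟨hj, hM⟩⟩, And.left⟩

lemma IsPartialColoring.uncolor (hφ : IsPartialColoring C φ) :
    IsPartialColoring C (uncolor C u c φ) :=
  ⟨fun v j h => hφ.1 v j (uncolor_eq_some.1 h).1,
    fun v w jv jw hv hw => hφ.2 v w jv jw (uncolor_eq_some.1 hv).1 (uncolor_eq_some.1 hw).1⟩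

lemma blockers_uncolor_self : blockers C u c (uncolor C u c φ) = ∅ :=
  Set.eq_empty_iff_forall_notMem.2 fun _ hx => (uncolor_eq_some.1 hx.1).2 hx.2

lemma blockers_uncolor_of_ne (h : c' ≠ c) :
    blockers C u c' (uncolor C u c φ) = blockers C u c' φ := by
  ext x
  simp only [blockers, Set.mem_ofPred_eq, uncolor_eq_some]
  exact ⟨fun hx => ⟨hx.1.1, hx.2⟩,
    fun hx => ⟨⟨hx.1, fun hM => h (eq_of_adj_of_adj hx.2 hM)⟩, hx.2⟩⟩

lemma availColors_uncolor (hc : c ∈ C.L u) :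
    availColors C u (uncolor C u c φ) = insert c (availColors C u φ) := by
  ext c'
  rw [mem_insert, mem_availColors, mem_availColors]
  rcases eq_or_ne c' c with rfl | h
  · simp [hc, blockers_uncolor_self]
  · simp [h, blockers_uncolor_of_ne h]

lemma blockers_subset_candidates (hφ : IsPartialColoring C φ) :
    blockers C u c φ ⊆ candidates C u c (uncolor C u c φ) := fun x hx =>
  ⟨uncolor_of_mem hx, hφ.1 x.1 x.2 hx.1, hx.2,
    fun w j' hw => hφ.2 x.1 w x.2 j' hx.1 (uncolor_eq_some.1 hw).1⟩

lemma isIndepSet_blockers (hφ : IsPartialColoring C φ) :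
    (coverGraph C).IsIndepSet (blockers C u c φ) :=
  fun x hx y hy _ => hφ.2 x.1 y.1 x.2 y.2 hx.1 hy.1

lemma recolor_of_mem (hS : S ⊆ candidates C u c ψ) (h : (v, j) ∈ S) : recolor ψ S v = some j := by
  have hex : ∃ j, (v, j) ∈ S := ⟨j, h⟩
  rw [recolor, dif_pos hex]
  exact congrArg some (C.matching u c v _ _ (hS hex.choose_spec).2.2.1 (hS h).2.2.1)

lemma recolor_of_forall_notMem (h : ∀ j, (v, j) ∉ S) : recolor ψ S v = ψ v := by
  rw [recolor, dif_neg (not_exists.2 h)]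

lemma recolor_eq_some (hS : S ⊆ candidates C u c ψ) :
    recolor ψ S v = some j ↔ (v, j) ∈ S ∨ ψ v = some j := by
  by_cases hex : ∃ j', (v, j') ∈ S
  · obtain ⟨j', hj'⟩ := hex
    rw [recolor_of_mem hS hj', Option.some_inj]
    refine ⟨fun h => .inl (h ▸ hj'), ?_⟩
    rintro (h | h)
    · exact C.matching u c v _ _ (hS hj').2.2.1 (hS h).2.2.1
    · rw [(hS hj').1] at h; cases h
  · push Not at hex
    rw [recolor_of_forall_notMem hex]
    exact ⟨.inr, fun h => h.resolve_left (hex j)⟩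

lemma recolor_self (hS : S ⊆ candidates C u c ψ) : recolor ψ S u = ψ u :=
  recolor_of_forall_notMem fun _ h => H.loopless.irrefl u (C.adj_of _ _ _ _ (hS h).2.2.1)

lemma IsPartialColoring.recolor (hψ : IsPartialColoring C ψ) (hS : S ⊆ candidates C u c ψ)
    (hI : (coverGraph C).IsIndepSet S) : IsPartialColoring C (recolor ψ S) := by
  refine ⟨fun v j h => ?_, fun v w jv jw hv hw hM => ?_⟩
  · rcases (recolor_eq_some hS).1 h with h | h
    · exact (hS h).2.1
    · exact hψ.1 v j h
  · rcases (recolor_eq_some hS).1 hv with hv | hv <;>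
      rcases (recolor_eq_some hS).1 hw with hw | hw
    · by_cases he : ((v, jv) : V × ℕ) = (w, jw)
      · cases he; exact not_adj_self (v, jv) hM
      · exact hI hv hw he hM
    · exact (hS hv).2.2.2 w jw hw hM
    · exact (hS hw).2.2.2 v jv hv (C.symm _ _ _ _ hM)
    · exact hψ.2 v w jv jw hv hw hM

lemma blockers_recolor (hc : c ∈ availColors C u ψ) (hS : S ⊆ candidates C u c ψ) :
    blockers C u c (recolor ψ S) = S := by
  have hψ := (mem_availColors.1 hc).2
  ext ⟨v, j⟩
  simp only [blockers, Set.mem_ofPred_eq, recolor_eq_some hS]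
  refine ⟨fun ⟨h, hM⟩ => h.resolve_right fun h' => ?_, fun h => ⟨.inl h, (hS h).2.2.1⟩⟩
  exact Set.eq_empty_iff_forall_notMem.1 hψ (v, j) ⟨h', hM⟩

lemma blockers_recolor_of_ne (hS : S ⊆ candidates C u c ψ) (h : c' ≠ c) :
    blockers C u c' (recolor ψ S) = blockers C u c' ψ := by
  ext ⟨v, j⟩
  simp only [blockers, Set.mem_ofPred_eq, recolor_eq_some hS]
  refine ⟨fun ⟨hv, hM⟩ => ⟨hv.resolve_left fun hS' => h ?_, hM⟩, fun ⟨hv, hM⟩ => ⟨.inr hv, hM⟩⟩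
  exact eq_of_adj_of_adj hM (hS hS').2.2.1

lemma uncolor_recolor (hc : c ∈ availColors C u ψ) (hS : S ⊆ candidates C u c ψ) :
    uncolor C u c (recolor ψ S) = ψ := by
  funext v
  by_cases hex : ∃ j, (v, j) ∈ S
  · obtain ⟨j, hj⟩ := hex
    rw [(hS hj).1]
    exact uncolor_of_mem ((blockers_recolor hc hS).symm ▸ hj)
  · push Not at hex
    rw [uncolor_of_forall_notMem ((blockers_recolor hc hS).symm ▸ hex),
      recolor_of_forall_notMem hex]

lemma recolor_blockers (hφ : IsPartialColoring C φ) :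
    recolor (uncolor C u c φ) (blockers C u c φ) = φ := by
  funext v
  by_cases hex : ∃ j, (v, j) ∈ blockers C u c φ
  · obtain ⟨j, hj⟩ := hex
    rw [recolor_of_mem (blockers_subset_candidates hφ) hj, hj.1]
  · push Not at hex
    rw [recolor_of_forall_notMem hex, uncolor_of_forall_notMem hex]

lemma mem_availColors_uncolor (hc : c ∈ C.L u) : c ∈ availColors C u (uncolor C u c φ) :=
  mem_availColors.2 ⟨hc, blockers_uncolor_self⟩

lemma card_availColors_uncolor (hc : c ∈ C.L u) (hne : (blockers C u c φ).Nonempty) :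
    #(availColors C u (uncolor C u c φ)) = #(availColors C u φ) + 1 := by
  rw [availColors_uncolor hc, card_insert_of_notMem fun h => hne.ne_empty (mem_availColors.1 h).2]

lemma heavyColors_uncolor {k : ℕ} (hk : 0 < k) :
    heavyColors C u k (uncolor C u c φ) = (heavyColors C u k φ).erase c := by
  ext c'
  simp only [heavyColors, mem_erase, mem_filter]
  rcases eq_or_ne c' c with rfl | h
  · simp [blockers_uncolor_self, Nat.pos_iff_ne_zero.1 hk]
  · simp [h, blockers_uncolor_of_ne h]

lemma uncolor_injOn : Set.InjOn (uncolor C u · φ) {c | (blockers C u c φ).Nonempty} := by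
  intro c hc c' _ (h : uncolor C u c φ = uncolor C u c' φ)
  by_contra hne
  have := blockers_uncolor_of_ne (C := C) (u := u) (φ := φ) hne
  rw [← h, blockers_uncolor_self] at this
  exact hc.ne_empty this.symm

variable (C u) in
/-- IS-richness applies to the candidates of `c` exactly when `c` is not thin. -/
def IsThin (b : ℝ) (Δ : ℕ) (c : ℕ) (ψ : V → Option ℕ) : Prop :=
  (binomLe (candidates C u c ψ).ncard b : ℝ) ≤ (Δ : ℝ) ^ ((1 : ℝ) / 3)

open Classical in
variable (C u) in
noncomputable def thinColors (b : ℝ) (Δ : ℕ) (φ : V → Option ℕ) : Finset ℕ :=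
  {c ∈ lightColors C u ⌊b⌋₊ φ | IsThin C u b Δ c (uncolor C u c φ)}

open Classical in
variable (C u) in
noncomputable def richColors (b : ℝ) (Δ : ℕ) (φ : V → Option ℕ) : Finset ℕ :=
  {c ∈ lightColors C u ⌊b⌋₊ φ | ¬ IsThin C u b Δ c (uncolor C u c φ)}

lemma mem_thinColors {b : ℝ} {Δ : ℕ} : c ∈ thinColors C u b Δ φ ↔
    c ∈ lightColors C u ⌊b⌋₊ φ ∧ IsThin C u b Δ c (uncolor C u c φ) := by
  simp only [thinColors, mem_filter]

lemma mem_richColors {b : ℝ} {Δ : ℕ} : c ∈ richColors C u b Δ φ ↔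
    c ∈ lightColors C u ⌊b⌋₊ φ ∧ ¬ IsThin C u b Δ c (uncolor C u c φ) := by
  simp only [richColors, mem_filter]

lemma card_thinColors_add_card_richColors (b : ℝ) (Δ : ℕ) :
    #(thinColors C u b Δ φ) + #(richColors C u b Δ φ) = #(lightColors C u ⌊b⌋₊ φ) := by
  classical
  exact card_filter_add_card_filter_not _

lemma card_L_le_avail_add_light_add_heavy (n : ℕ) (φ : V → Option ℕ) :
    #(C.L u) ≤ #(availColors C u φ) + #(lightColors C u n φ) + #(heavyColors C u (n + 1) φ) := by
  classical
  calc #(C.L u) ≤ #(availColors C u φ ∪ lightColors C u n φ ∪ heavyColors C u (n + 1) φ) := by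
        refine card_le_card fun c hc => ?_
        simp only [mem_union, mem_availColors, lightColors, heavyColors, mem_filter, hc, true_and]
        rcases (blockers C u c φ).eq_empty_or_nonempty with h | h
        · exact .inl (.inl h)
        · rcases le_or_gt (blockers C u c φ).ncard n with h' | h'
          exacts [.inl (.inr ⟨h, h'⟩), .inr h']
    _ ≤ _ := (card_union_le _ _).trans (Nat.add_le_add_right (card_union_le _ _) _)

end Recoloring

section Counting

variable {V : Type} [Fintype V] {H : SimpleGraph V} (C : CorrAssignment H) (u : V)

open Classical in
noncomputable def colorings : Finset (V → Option ℕ) :=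
  {φ ∈ Fintype.piFinset fun v => insertNone (C.L v) | IsPartialColoring C φ ∧ φ u = none}

variable {C u} {c : ℕ} {φ ψ : V → Option ℕ}

lemma mem_colorings : φ ∈ colorings C u ↔ IsPartialColoring C φ ∧ φ u = none := by
  simp only [colorings, mem_filter, Fintype.mem_piFinset, mem_insertNone, and_iff_right_iff_imp]
  exact fun hφ v j hj => hφ.1.1 v j hj

lemma colorings_nonempty : (colorings C u).Nonempty :=
  ⟨fun _ => none, mem_colorings.2 ⟨⟨nofun, nofun⟩, rfl⟩⟩

lemma uncolor_mem_colorings (hφ : φ ∈ colorings C u) : uncolor C u c φ ∈ colorings C u :=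
  mem_colorings.2 ⟨(mem_colorings.1 hφ).1.uncolor, uncolor_eq_none (mem_colorings.1 hφ).2⟩

lemma finite_coverVertices : {x : V × ℕ | x.2 ∈ C.L x.1}.Finite :=
  (Set.finite_univ.biUnion fun v _ => (C.L v).finite_toSet.image (Prod.mk v)).subset
    fun x hx => Set.mem_biUnion (Set.mem_univ x.1) ⟨x.2, hx, rfl⟩

lemma finite_candidates : (candidates C u c ψ).Finite :=
  finite_coverVertices.subset fun _ hx => hx.2.1

/-- Double counting: a neighbour `v` of `u` blocks at most one color, as `M` is a matching at
`(v, φ v)`. -/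
lemma card_heavyColors_mul_le (k : ℕ) (φ : V → Option ℕ) :
    #(heavyColors C u k φ) * k ≤ maxDeg H := by
  classical
  let N : Finset V := {v | H.Adj u v}
  let r : ℕ → V → Prop := fun c v => ∃ j, φ v = some j ∧ C.M u c v j
  have hN : #N ≤ maxDeg H := by
    have : (H.neighborSet u).ncard = #N := by
      rw [← Set.ncard_coe_finset]; congr 1; ext; simp [N]
    exact this ▸ Finset.le_sup (f := fun v => (H.neighborSet v).ncard) (mem_univ u)
  have hmul := card_mul_le_card_mul r (m := k) (n := 1) (s := heavyColors C u k φ) (t := N)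
    (fun c hc => ?_) (fun v _ => card_le_one.2 fun c hc c' hc' => ?_)
  · omega
  · refine (mem_filter.1 hc).2.trans ?_
    rw [← Set.ncard_coe_finset]
    refine Set.ncard_le_ncard_of_injOn Prod.fst (fun x hx => ?_) (fun x hx y hy hxy => ?_)
      (finite_toSet _)
    · simpa [N, r] using ⟨C.adj_of _ _ _ _ hx.2, x.2, hx.1, hx.2⟩
    · exact Prod.ext hxy (Option.some_inj.1 (hx.1.symm.trans (hxy ▸ hy.1)))
  · obtain ⟨j, hj, hM⟩ := (mem_bipartiteBelow r).1 hc |>.2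
    obtain ⟨j', hj', hM'⟩ := (mem_bipartiteBelow r).1 hc' |>.2
    cases hj.symm.trans hj'
    exact eq_of_adj_of_adj hM hM'

/-- On the fibre of `uncolor c` over `ψ`, `blockers c` is inverted by `recolor ψ`. -/
lemma card_filter_uncolor_eq (hψ : ψ ∈ colorings C u) (hc : c ∈ availColors C u ψ)
    (P : Set (V × ℕ) → Prop) [DecidablePred P] :
    #{φ ∈ colorings C u | uncolor C u c φ = ψ ∧ P (blockers C u c φ)} =
      {S | S ⊆ candidates C u c ψ ∧ (coverGraph C).IsIndepSet S ∧ P S}.ncard := by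
  rw [← Set.ncard_coe_finset]
  refine Set.ncard_congr (fun φ _ => blockers C u c φ) ?_ ?_ ?_
  · intro φ hφ
    obtain ⟨hΩ, rfl, hP⟩ := mem_filter.1 (mem_coe.1 hφ)
    exact ⟨blockers_subset_candidates (mem_colorings.1 hΩ).1,
      isIndepSet_blockers (mem_colorings.1 hΩ).1, hP⟩
  · intro φ φ' hφ hφ' h
    obtain ⟨hφ, hφψ, -⟩ := mem_filter.1 (mem_coe.1 hφ)
    obtain ⟨hφ', hφψ', -⟩ := mem_filter.1 (mem_coe.1 hφ')
    rw [← recolor_blockers (mem_colorings.1 hφ).1, ← recolor_blockers (mem_colorings.1 hφ').1,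
      hφψ, hφψ']
    exact congrArg _ h
  · rintro S ⟨hS, hI, hP⟩
    have hψ' := mem_colorings.1 hψ
    refine ⟨recolor ψ S, mem_filter.2 ⟨mem_colorings.2 ⟨hψ'.1.recolor hS hI,
      (recolor_self hS).trans hψ'.2⟩, uncolor_recolor hc hS, ?_⟩, blockers_recolor hc hS⟩
    rwa [blockers_recolor hc hS]

end Counting

section Levels

variable {V : Type} [Fintype V] {H : SimpleGraph V} (C : CorrAssignment H) (u : V)

open Classical in
noncomputable def level (b : ℝ) (t m : ℕ) : Finset (V → Option ℕ) :=
  {φ ∈ colorings C u | #(availColors C u φ) ≤ t ∧ m ≤ #(heavyColors C u (⌊b⌋₊ + 1) φ)}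

variable {C u} {b : ℝ} {Δ : ℕ} {c : ℕ} {φ ψ : V → Option ℕ}

lemma mem_level {t m : ℕ} : φ ∈ level C u b t m ↔ φ ∈ colorings C u ∧
    #(availColors C u φ) ≤ t ∧ m ≤ #(heavyColors C u (⌊b⌋₊ + 1) φ) := by
  rw [level, mem_filter]

lemma level_subset_colorings (t m : ℕ) : level C u b t m ⊆ colorings C u :=
  fun _ hφ => (mem_level.1 hφ).1

lemma card_heavyColors_le_div (k : ℕ) (φ : V → Option ℕ) :
    #(heavyColors C u (k + 1) φ) ≤ maxDeg H / (k + 1) :=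
  (Nat.le_div_iff_mul_le k.succ_pos).2 (card_heavyColors_mul_le _ _)

lemma level_eq_empty (hmax : maxDeg H ≤ Δ) {t m : ℕ} (hm : Δ / (⌊b⌋₊ + 1) < m) :
    level C u b t m = ∅ :=
  filter_eq_empty_iff.2 fun φ _ h => by
    have := (card_heavyColors_le_div (C := C) (u := u) ⌊b⌋₊ φ).trans
      (Nat.div_le_div_right (c := ⌊b⌋₊ + 1) hmax)
    omega

lemma uncolor_mem_level {t m : ℕ} (hφ : φ ∈ level C u b t m) (hc : c ∈ lightColors C u ⌊b⌋₊ φ) :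
    uncolor C u c φ ∈ level C u b (t + 1) m := by
  obtain ⟨hφ, havail, hheavy⟩ := mem_level.1 hφ
  obtain ⟨hcL, hne, hsmall⟩ := mem_lightColors.1 hc
  refine mem_level.2 ⟨uncolor_mem_colorings hφ, ?_, ?_⟩
  · rw [card_availColors_uncolor hcL hne]; omega
  · rwa [heavyColors_uncolor (by omega : 0 < ⌊b⌋₊ + 1), erase_eq_of_notMem fun h => by
      have := (mem_heavyColors.1 h).2; omega]

/-- Trading the light blockers of `c` in `φ₀` for a heavy set of blockers keeps the number of
available colors and adds the heavy color `c`. -/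
lemma mem_level_of_uncolor_eq {t m : ℕ} {φ₀ : V → Option ℕ} (hφ₀ : φ₀ ∈ level C u b t m)
    (hc₀ : c ∈ lightColors C u ⌊b⌋₊ φ₀) (hφ : φ ∈ colorings C u)
    (hc : c ∈ heavyColors C u (⌊b⌋₊ + 1) φ) (h : uncolor C u c φ = uncolor C u c φ₀) :
    φ ∈ level C u b t (m + 1) := by
  obtain ⟨-, havail, hheavy⟩ := mem_level.1 hφ₀
  obtain ⟨hcL, hne₀, hsmall⟩ := mem_lightColors.1 hc₀
  have hne : (blockers C u c φ).Nonempty :=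
    Set.nonempty_of_ncard_ne_zero (by have := (mem_heavyColors.1 hc).2; omega)
  have havail' := card_availColors_uncolor hcL hne
  rw [h, card_availColors_uncolor hcL hne₀] at havail'
  have hheavy' := congrArg card (heavyColors_uncolor (C := C) (u := u) (c := c) (φ := φ)
    (by omega : 0 < ⌊b⌋₊ + 1))
  rw [h, heavyColors_uncolor (by omega : 0 < ⌊b⌋₊ + 1), card_erase_of_mem hc,
    erase_eq_of_notMem fun h => by have := (mem_heavyColors.1 h).2; omega] at hheavy'
  have := card_pos.2 ⟨c, hc⟩
  exact mem_level.2 ⟨hφ, by omega, by omega⟩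

lemma card_fiber_thinColors_le (hψ : ψ ∈ colorings C u) (hc : c ∈ availColors C u ψ) :
    #{φ ∈ colorings C u | uncolor C u c φ = ψ ∧ c ∈ thinColors C u b Δ φ} ≤
      ⌊(Δ : ℝ) ^ ((1 : ℝ) / 3)⌋₊ := by
  classical
  by_cases hthin : IsThin C u b Δ c ψ
  · have hcL := (mem_availColors.1 hc).1
    calc _ ≤ #{φ ∈ colorings C u | uncolor C u c φ = ψ ∧
            ((blockers C u c φ).Nonempty ∧ (blockers C u c φ).ncard ≤ ⌊b⌋₊)} :=
          card_le_card <| monotone_filter_right _ fun φ _ h =>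
            ⟨h.1, (mem_lightColors.1 (mem_thinColors.1 h.2).1).2⟩
      _ = _ := card_filter_uncolor_eq hψ hc (fun S => S.Nonempty ∧ S.ncard ≤ ⌊b⌋₊)
      _ ≤ {S | S ⊆ candidates C u c ψ ∧ S.Nonempty ∧ S.ncard ≤ ⌊b⌋₊}.ncard :=
          Set.ncard_le_ncard (fun S h => ⟨h.1, h.2.2⟩)
            (finite_candidates.finite_subsets.subset fun _ h => h.1)
      _ ≤ _ := by
          have := ncard_setOf_nonempty_subset_add_one_le (finite_candidates (C := C) (u := u)
            (c := c) (ψ := ψ)) b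
          have := Nat.le_floor hthin
          omega
  · convert Nat.zero_le _
    refine card_eq_zero.2 (filter_eq_empty_iff.2 fun φ _ ⟨hφψ, hc'⟩ => hthin ?_)
    exact hφψ ▸ (mem_thinColors.1 hc').2

lemma card_fiber_lightColors_lt (hrich : C.ISRich b Δ) (hψ : ψ ∈ colorings C u)
    (hc : c ∈ availColors C u ψ) (hthick : ¬ IsThin C u b Δ c ψ) :
    #{φ ∈ colorings C u | uncolor C u c φ = ψ ∧ c ∈ lightColors C u ⌊b⌋₊ φ} <
      #{φ ∈ colorings C u | uncolor C u c φ = ψ ∧ c ∈ heavyColors C u (⌊b⌋₊ + 1) φ} := by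
  classical
  have hcL := (mem_availColors.1 hc).1
  have hlight : #{φ ∈ colorings C u | uncolor C u c φ = ψ ∧ c ∈ lightColors C u ⌊b⌋₊ φ} =
      #{φ ∈ colorings C u | uncolor C u c φ = ψ ∧
        ((blockers C u c φ).Nonempty ∧ (blockers C u c φ).ncard ≤ ⌊b⌋₊)} := by
    congr 1; exact filter_congr fun φ _ => by simp [mem_lightColors, hcL]
  have hheavy : #{φ ∈ colorings C u | uncolor C u c φ = ψ ∧ c ∈ heavyColors C u (⌊b⌋₊ + 1) φ} =
      #{φ ∈ colorings C u | uncolor C u c φ = ψ ∧ ⌊b⌋₊ + 1 ≤ (blockers C u c φ).ncard} := by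
    congr 1; exact filter_congr fun φ _ => by simp [mem_heavyColors, hcL]
  rw [hlight, hheavy, card_filter_uncolor_eq hψ hc (fun S => S.Nonempty ∧ S.ncard ≤ ⌊b⌋₊),
    card_filter_uncolor_eq hψ hc (fun S => ⌊b⌋₊ + 1 ≤ S.ncard)]
  exact ncard_small_indepSets_lt hrich finite_candidates (x := (u, c)) (fun _ h => h.2.2.1)
    (not_le.1 hthick)

lemma card_filter_thinColors_mul_le (t m s : ℕ) :
    #{φ ∈ level C u b t m | s ≤ #(thinColors C u b Δ φ)} * s ≤
      #(level C u b (t + 1) m) * ((t + 1) * ⌊(Δ : ℝ) ^ ((1 : ℝ) / 3)⌋₊) := by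
  classical
  refine card_mul_le_card_mul (fun φ ψ => ∃ c ∈ thinColors C u b Δ φ, uncolor C u c φ = ψ)
    (fun φ hφ => ?_) (fun ψ hψ => ?_)
  · obtain ⟨hφ, hs⟩ := mem_filter.1 hφ
    have hlight {c} (hc : c ∈ thinColors C u b Δ φ) := mem_lightColors.1 (mem_thinColors.1 hc).1
    rw [← card_image_of_injOn fun c hc c' hc' => uncolor_injOn (hlight hc).2.1 (hlight hc').2.1]
      at hs
    refine hs.trans (card_le_card fun ψ hψ => ?_)
    obtain ⟨c, hc, rfl⟩ := mem_image.1 hψ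
    exact (mem_bipartiteAbove _).2 ⟨uncolor_mem_level hφ (mem_thinColors.1 hc).1, c, hc, rfl⟩
  · have hψ' := mem_level.1 hψ
    calc _ ≤ #((availColors C u ψ).biUnion fun c =>
            {φ ∈ colorings C u | uncolor C u c φ = ψ ∧ c ∈ thinColors C u b Δ φ}) := by
          refine card_le_card fun φ hφ => ?_
          obtain ⟨hφA, c, hc, rfl⟩ := (mem_bipartiteBelow _).1 hφ
          refine mem_biUnion.2 ⟨c, ?_, mem_filter.2 ⟨?_, rfl, hc⟩⟩
          · exact mem_availColors_uncolor (mem_lightColors.1 (mem_thinColors.1 hc).1).1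
          · exact (mem_level.1 (mem_filter.1 hφA).1).1
      _ ≤ ∑ c ∈ availColors C u ψ, ⌊(Δ : ℝ) ^ ((1 : ℝ) / 3)⌋₊ :=
          card_biUnion_le.trans (sum_le_sum fun c hc => card_fiber_thinColors_le hψ'.1 hc)
      _ ≤ _ := by rw [sum_const, smul_eq_mul]; exact Nat.mul_le_mul_right _ hψ'.2.1

lemma card_filter_richColors_le (hrich : C.ISRich b Δ) (t m c : ℕ) :
    #{φ ∈ level C u b t m | c ∈ richColors C u b Δ φ} ≤
      #{φ ∈ level C u b t (m + 1) | c ∈ heavyColors C u (⌊b⌋₊ + 1) φ} := by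
  classical
  refine card_le_card_of_forall_card_fiber_le (uncolor C u c) fun ψ hψ => ?_
  obtain ⟨φ₀, hφ₀, rfl⟩ := mem_image.1 hψ
  obtain ⟨hφ₀, hc₀⟩ := mem_filter.1 hφ₀
  have hlight := (mem_richColors.1 hc₀).1
  have hΩ₀ := (mem_level.1 hφ₀).1
  refine le_of_lt ?_
  calc _ ≤ #{φ ∈ colorings C u | uncolor C u c φ = uncolor C u c φ₀ ∧
          c ∈ lightColors C u ⌊b⌋₊ φ} := card_le_card fun φ hφ => by
        obtain ⟨hφ, h⟩ := mem_filter.1 hφ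
        obtain ⟨hφ, hc⟩ := mem_filter.1 hφ
        exact mem_filter.2 ⟨(mem_level.1 hφ).1, h, (mem_richColors.1 hc).1⟩
    _ < #{φ ∈ colorings C u | uncolor C u c φ = uncolor C u c φ₀ ∧
          c ∈ heavyColors C u (⌊b⌋₊ + 1) φ} :=
        card_fiber_lightColors_lt hrich (uncolor_mem_colorings hΩ₀)
          (mem_availColors_uncolor (mem_lightColors.1 hlight).1) (mem_richColors.1 hc₀).2
    _ ≤ _ := card_le_card fun φ hφ => by
        obtain ⟨hφ, h, hc⟩ := mem_filter.1 hφ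
        exact mem_filter.2 ⟨mem_filter.2 ⟨mem_level_of_uncolor_eq hφ₀ hlight hφ hc h, hc⟩, h⟩

lemma card_filter_richColors_mul_le (hrich : C.ISRich b Δ) (t m r : ℕ) :
    #{φ ∈ level C u b t m | r ≤ #(richColors C u b Δ φ)} * r ≤
      #(level C u b t (m + 1)) * (maxDeg H / (⌊b⌋₊ + 1)) := by
  classical
  have hrichL φ : richColors C u b Δ φ ⊆ C.L u := fun c hc =>
    (mem_lightColors.1 (mem_richColors.1 hc).1).1
  have hheavyL φ : heavyColors C u (⌊b⌋₊ + 1) φ ⊆ C.L u := fun c hc => (mem_heavyColors.1 hc).1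
  calc _ ≤ ∑ φ ∈ level C u b t m, #(richColors C u b Δ φ) := by
        rw [← smul_eq_mul]
        exact (card_nsmul_le_sum _ (fun φ => #(richColors C u b Δ φ)) r
          fun φ hφ => (mem_filter.1 hφ).2).trans
          (sum_le_sum_of_subset (filter_subset _ _))
    _ = ∑ c ∈ C.L u, #{φ ∈ level C u b t m | c ∈ richColors C u b Δ φ} :=
        sum_card_eq_sum_card_filter_mem fun φ _ => hrichL φ
    _ ≤ ∑ c ∈ C.L u, #{φ ∈ level C u b t (m + 1) | c ∈ heavyColors C u (⌊b⌋₊ + 1) φ} :=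
        sum_le_sum fun c _ => card_filter_richColors_le hrich t m c
    _ = ∑ φ ∈ level C u b t (m + 1), #(heavyColors C u (⌊b⌋₊ + 1) φ) :=
        (sum_card_eq_sum_card_filter_mem fun φ _ => hheavyL φ).symm
    _ ≤ _ := by
        rw [← smul_eq_mul]
        exact sum_le_card_nsmul _ _ _ fun φ _ => card_heavyColors_le_div _ _

end Levels

section Descent

variable {V : Type} [Fintype V] {H : SimpleGraph V} {C : CorrAssignment H} {u : V} {b : ℝ}
  {Δ T : ℕ}

/-- As every color of `L(u)` is available, light or heavy, a coloring of a level has many thin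
or many rich light colors. -/
lemma three_mul_card_level_le (hrich : C.ISRich b Δ) (hmax : maxDeg H ≤ Δ)
    (hL : T + 3 * T * ⌊(Δ : ℝ) ^ ((1 : ℝ) / 3)⌋₊ + 4 * (Δ / (⌊b⌋₊ + 1)) ≤ #(C.L u))
    {t : ℕ} (ht : t < T) (m : ℕ) :
    3 * #(level C u b t m) ≤ #(level C u b (t + 1) m) + #(level C u b t (m + 1)) := by
  classical
  set m₀ := ⌊(Δ : ℝ) ^ ((1 : ℝ) / 3)⌋₊
  set h := Δ / (⌊b⌋₊ + 1)
  have hdiv : maxDeg H / (⌊b⌋₊ + 1) ≤ h := Nat.div_le_div_right hmax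
  have hcover : level C u b t m ⊆
      {φ ∈ level C u b t m | 3 * T * m₀ + 1 ≤ #(thinColors C u b Δ φ)} ∪
        {φ ∈ level C u b t m | 3 * h + 1 ≤ #(richColors C u b Δ φ)} := by
    intro φ hφ
    have := mem_level.1 hφ
    have := card_L_le_avail_add_light_add_heavy (C := C) (u := u) ⌊b⌋₊ φ
    have := card_thinColors_add_card_richColors (C := C) (u := u) (φ := φ) b Δ
    have := card_heavyColors_le_div (C := C) (u := u) ⌊b⌋₊ φ
    by_contra hφA
    simp only [mem_union, mem_filter, not_or, not_and, not_le] at hφA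
    have := hφA.1 hφ
    have := hφA.2 hφ
    omega
  have hthin := three_mul_le_of_mul_le (by have := Nat.mul_le_mul_right m₀ ht; nlinarith)
    (card_filter_thinColors_mul_le (C := C) (u := u) (b := b) (Δ := Δ) t m (3 * T * m₀ + 1))
  have hrich' := three_mul_le_of_mul_le (w := h) (by omega)
    ((card_filter_richColors_mul_le (u := u) hrich t m (3 * h + 1)).trans (Nat.mul_le_mul_left _ hdiv))
  have := (card_le_card hcover).trans (card_union_le _ _)
  omega

/-- The recursion in `m` terminates because at most `Δ/(b+1)` colors are heavy. -/
theorem card_level_le (hrich : C.ISRich b Δ) (hmax : maxDeg H ≤ Δ)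
    (hL : T + 3 * T * ⌊(Δ : ℝ) ^ ((1 : ℝ) / 3)⌋₊ + 4 * (Δ / (⌊b⌋₊ + 1)) ≤ #(C.L u))
    (t m : ℕ) (ht : t ≤ T) :
    (#(level C u b t m) : ℝ) ≤ (2 / 3) ^ (T - t) * #(colorings C u) := by
  rcases ht.lt_or_eq with ht | rfl
  · rcases lt_or_ge (Δ / (⌊b⌋₊ + 1)) m with hm | hm
    · rw [level_eq_empty hmax hm, card_empty, Nat.cast_zero]
      positivity
    · have h3 : (3 * #(level C u b t m) : ℝ) ≤
          #(level C u b (t + 1) m) + #(level C u b t (m + 1)) := by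
        exact_mod_cast three_mul_card_level_le hrich hmax hL ht m
      have ih₁ := card_level_le hrich hmax hL (t + 1) m ht
      have ih₂ := card_level_le hrich hmax hL t (m + 1) ht.le
      rw [show T - t = T - (t + 1) + 1 by omega, pow_succ] at ih₂ ⊢
      have : (0 : ℝ) ≤ (2 / 3) ^ (T - (t + 1)) * #(colorings C u) := by positivity
      nlinarith
  · rw [Nat.sub_self, pow_zero, one_mul]
    exact_mod_cast card_le_card (level_subset_colorings _ _)
termination_by (T - t) + (Δ / (⌊b⌋₊ + 1) + 1 - m)

end Descent

lemma eight_mul_pow_three_mul_two_thirds_pow_lt {Δ t : ℕ} (hΔ : 8 * 14 ^ 7 < Δ)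
    (ht : (Δ : ℝ) ^ ((7 : ℝ) / 12) ≤ t) : 8 * (Δ : ℝ) ^ 3 * (2 / 3) ^ t < 1 := by
  have hΔ' : (8 * 14 ^ 7 : ℝ) < Δ := by exact_mod_cast hΔ
  have hΔ1 : (1 : ℝ) ≤ Δ := by linarith
  have h4 : (Δ : ℝ) ^ 4 ≤ (t : ℝ) ^ 7 :=
    calc (Δ : ℝ) ^ 4 = (Δ : ℝ) ^ (4 : ℝ) := (Real.rpow_natCast _ 4).symm
      _ ≤ (Δ : ℝ) ^ ((7 : ℝ) / 12 * 7) := Real.rpow_le_rpow_of_exponent_le hΔ1 (by norm_num)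
      _ = ((Δ : ℝ) ^ ((7 : ℝ) / 12)) ^ 7 := by
          rw [Real.rpow_mul (by positivity)]; exact_mod_cast Real.rpow_natCast _ 7
      _ ≤ (t : ℝ) ^ 7 := by gcongr
  have h32 := pow_seven_div_le_three_halves_pow t
  have hpos : (0 : ℝ) < (3 / 2) ^ t := by positivity
  rw [show (2 / 3 : ℝ) ^ t = ((3 / 2) ^ t)⁻¹ by rw [← inv_pow]; norm_num, ← div_eq_mul_inv,
    div_lt_one hpos]
  have : 8 * (Δ : ℝ) ^ 3 * 14 ^ 7 < (Δ : ℝ) ^ 4 := by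
    rw [pow_succ (Δ : ℝ) 3]; nlinarith [pow_pos (by linarith : (0 : ℝ) < Δ) 3]
  rw [div_pow] at h32
  calc 8 * (Δ : ℝ) ^ 3 < (t : ℝ) ^ 7 / 14 ^ 7 := by rw [lt_div_iff₀ (by positivity)]; linarith
    _ ≤ _ := h32

/-- In terms of `x = Δ^{1/48}`, the left side is at most `16 x^44 + 4Δ/b` while
`ℓ ≥ 5Δ/b ≥ 5x^47`. -/
lemma descent_budget_le {b : ℝ} {Δ ℓ : ℕ} (hb : 0 < b) (hbΔ : b ≤ (Δ : ℝ) ^ ((1 : ℝ) / 48))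
    (hΔ : 3 ^ 48 ≤ Δ) (hℓ : 5 * (Δ : ℝ) / b ≤ ℓ) :
    2 * ⌈(Δ : ℝ) ^ ((7 : ℝ) / 12)⌉₊ + 3 * (2 * ⌈(Δ : ℝ) ^ ((7 : ℝ) / 12)⌉₊) *
      ⌊(Δ : ℝ) ^ ((1 : ℝ) / 3)⌋₊ + 4 * (Δ / (⌊b⌋₊ + 1)) ≤ ℓ := by
  set x := (Δ : ℝ) ^ ((1 : ℝ) / 48)
  have hpow (k : ℕ) : (Δ : ℝ) ^ ((k : ℝ) / 48) = x ^ k := by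
    rw [← Real.rpow_natCast, ← Real.rpow_mul (Nat.cast_nonneg _)]; ring_nf
  have hx : 3 ≤ x := by
    calc (3 : ℝ) = ((3 : ℝ) ^ 48) ^ ((1 : ℝ) / 48) := by
          rw [← Real.rpow_natCast, ← Real.rpow_mul (by norm_num)]; norm_num
      _ ≤ x := Real.rpow_le_rpow (by positivity) (by exact_mod_cast hΔ) (by norm_num)
  have hΔx : (Δ : ℝ) = x ^ 48 := by rw [← hpow 48]; norm_num
  rw [show (7 : ℝ) / 12 = ((28 : ℕ) : ℝ) / 48 by norm_num,
    show (1 : ℝ) / 3 = ((16 : ℕ) : ℝ) / 48 by norm_num, hpow, hpow]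
  have ht := (Nat.ceil_lt_add_one (by positivity : 0 ≤ x ^ 28)).le
  have hm := Nat.floor_le (by positivity : 0 ≤ x ^ 16)
  have hprod : (⌈x ^ 28⌉₊ : ℝ) * ⌊x ^ 16⌋₊ ≤ x ^ 44 + x ^ 16 :=
    (mul_le_mul ht hm (Nat.cast_nonneg _) (by positivity)).trans_eq (by ring)
  have hh : ((Δ / (⌊b⌋₊ + 1) : ℕ) : ℝ) ≤ Δ / b :=
    Nat.cast_div_le.trans (div_le_div_of_nonneg_left (Nat.cast_nonneg _) hb
      (by push_cast; exact (Nat.lt_floor_add_one b).le))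
  have hℓ' : 5 * ((Δ : ℝ) / b) ≤ ℓ := by rwa [mul_div_assoc] at hℓ
  have hx47 : x ^ 47 ≤ (Δ : ℝ) / b := by
    rw [le_div_iff₀ hb, hΔx, show x ^ 48 = x ^ 47 * x by ring]
    exact mul_le_mul_of_nonneg_left hbΔ (by positivity)
  have hx44 : 1 ≤ x ^ 44 := one_le_pow₀ (by linarith)
  have h16 : x ^ 16 ≤ x ^ 44 := pow_le_pow_right₀ (by linarith) (by norm_num)
  have h28 : x ^ 28 ≤ x ^ 44 := pow_le_pow_right₀ (by linarith) (by norm_num)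
  have h47 : 16 * x ^ 44 ≤ x ^ 47 := by
    have : (3 : ℝ) ^ 3 ≤ x ^ 3 := pow_le_pow_left₀ (by norm_num) hx 3
    rw [show x ^ 47 = x ^ 3 * x ^ 44 by ring]
    nlinarith
  have hmain : ((2 * ⌈x ^ 28⌉₊ + 3 * (2 * ⌈x ^ 28⌉₊) * ⌊x ^ 16⌋₊ + 4 * (Δ / (⌊b⌋₊ + 1)) : ℕ) :
      ℝ) ≤ ℓ := by
    push_cast
    linarith
  exact_mod_cast hmain

section Main

variable {V : Type} [Fintype V] {H : SimpleGraph V} (C : CorrAssignment H) (u : V)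

lemma ncard_setOf_eq_card_colorings :
    {φ : V → Option ℕ | IsPartialColoring C φ ∧ φ u = none}.ncard = #(colorings C u) := by
  rw [← Set.ncard_coe_finset]
  congr 1
  ext φ
  simp [mem_colorings]

lemma ncard_setOf_availCount_lt_le {b x : ℝ} {t : ℕ} (ht : x ≤ t) :
    {φ : V → Option ℕ | IsPartialColoring C φ ∧ φ u = none ∧ (availCount C φ u : ℝ) < x}.ncard ≤
      #(level C u b t 0) := by
  rw [← Set.ncard_coe_finset]
  refine Set.ncard_le_ncard (fun φ ⟨hφ, hu, hx⟩ => mem_level.2 ⟨mem_colorings.2 ⟨hφ, hu⟩, ?_,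
    Nat.zero_le _⟩) (finite_toSet _)
  rw [availCount_eq_card] at hx
  exact_mod_cast (hx.trans_le ht).le

theorem eight_mul_pow_three_mul_ncard_lt {b : ℝ} {Δ : ℕ} (hb : 0 < b)
    (hbΔ : b ≤ (Δ : ℝ) ^ ((1 : ℝ) / 48)) (hΔ : 3 ^ 48 ≤ Δ) (hmax : maxDeg H ≤ Δ)
    (hℓ : 5 * (Δ : ℝ) / b ≤ #(C.L u)) (hrich : C.ISRich b Δ) :
    8 * Δ ^ 3 * {φ : V → Option ℕ | IsPartialColoring C φ ∧ φ u = none ∧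
        (availCount C φ u : ℝ) < (Δ : ℝ) ^ ((7 : ℝ) / 12)}.ncard <
      {φ : V → Option ℕ | IsPartialColoring C φ ∧ φ u = none}.ncard := by
  set t := ⌈(Δ : ℝ) ^ ((7 : ℝ) / 12)⌉₊
  have hbad : ({φ : V → Option ℕ | IsPartialColoring C φ ∧ φ u = none ∧
      (availCount C φ u : ℝ) < (Δ : ℝ) ^ ((7 : ℝ) / 12)}.ncard : ℝ) ≤
        (2 / 3) ^ t * #(colorings C u) := by
    have := card_level_le hrich hmax (descent_budget_le hb hbΔ hΔ hℓ) t 0 (by omega)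
    rw [show 2 * t - t = t by omega] at this
    exact le_trans (by exact_mod_cast ncard_setOf_availCount_lt_le C u (Nat.le_ceil _)) this
  have hsmall := eight_mul_pow_three_mul_two_thirds_pow_lt (Δ := Δ) (by omega) (Nat.le_ceil _)
  have hΩ : (0 : ℝ) < #(colorings C u) := by exact_mod_cast colorings_nonempty.card_pos
  rw [ncard_setOf_eq_card_colorings, ← Nat.cast_lt (α := ℝ)]
  push_cast
  calc _ ≤ 8 * (Δ : ℝ) ^ 3 * ((2 / 3) ^ t * #(colorings C u)) := by gcongr
    _ < #(colorings C u) := by nlinarith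

end Main

end RandomCorr

/-- Probabilities for the uniform distribution are ratios of counts: `Pr[A] < 1/(8Δ³)` reads
`8Δ³·|A| < |Ω|`. -/
theorem few_available_colors_unlikely
    (b : ℕ → ℝ) (hb : ∀ Δ, 0 < b Δ)
    (hbo : ∀ ε : ℝ, 0 < ε → ∃ Δε : ℕ, ∀ Δ : ℕ, Δε ≤ Δ → b Δ ≤ (Δ : ℝ) ^ ε) :
    ∃ Δ₀ : ℕ, ∀ Δ : ℕ, Δ₀ ≤ Δ →
      ∀ (V : Type) [Fintype V] (H : SimpleGraph V) (ℓ : ℕ),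
        RandomCorr.maxDeg H ≤ Δ → Even ℓ → 5 * (Δ : ℝ) / b Δ ≤ (ℓ : ℝ) →
        ∀ C : RandomCorr.CorrAssignment H, C.ISRich (b Δ) Δ →
        ∀ u : V, (∀ v : V, v ≠ u → H.Adj u v) → (C.L u).card = ℓ →
          8 * Δ ^ 3 *
            Set.ncard {φ : V → Option ℕ | RandomCorr.IsPartialColoring C φ ∧
              φ u = none ∧
              (RandomCorr.availCount C φ u : ℝ) < (Δ : ℝ) ^ ((7 : ℝ)/12)} <
          Set.ncard {φ : V → Option ℕ | RandomCorr.IsPartialColoring C φ ∧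
            φ u = none} := by
  obtain ⟨Δ₁, hΔ₁⟩ := hbo (1 / 48) (by norm_num)
  refine ⟨max Δ₁ (3 ^ 48), fun Δ hΔ V _ H ℓ hmax _ hℓ C hrich u _ hLu => ?_⟩
  exact RandomCorr.eight_mul_pow_three_mul_ncard_lt C u (hb Δ) (hΔ₁ Δ (le_of_max_le_left hΔ))
    (le_of_max_le_right hΔ) hmax (hLu ▸ hℓ) hrich
end

section
/- The following holds for every sufficiently large Δ. Let G be a graph of maximum degree Δ and let (L,M) be a correspondence assignment for G. Let u be a vertex of G and let φ₀ be a partial (L,M)-coloring of G − N[u]. If φ is a partial (L,M)-coloring of G chosen uniformly at random, then the conditional probability, given that the restriction of φ to G − N[u] equals φ₀, of the event B_u (that there are at least Δ^{7/12} neighbors x of u such that x ∉ dom(φ) and the event A_x is false, where A_x is the event that x ∉ dom(φ) and fewer than Δ^{7/12} colors are available at x) is less than 1/(8Δ³). -/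
open Filter MeasureTheory

/-!
Let `B` be the set of partial colorings that agree with `φ₀` off `N[u]`, and `s = ⌊√Δ⌋`.
If `φ ∈ B` has at least `Δ^{7/12} ≥ 3s` uncolored neighbours of `u`, each with at least `3s`
available colors, then one can pick `s` of them in order and color them one after the other
in at least `(4s²)^s` ways, because coloring a vertex removes at most one available color
from any other vertex. Every such recoloring lies in `B`, and the recoloring together with the
sequence of recolored neighbours determines `φ`. Hence `|B_u| (4s²)^s ≤ |B| Δ^s`, and as
`4s² > 2Δ` this gives `|B_u| ≤ 2^{-s} |B| < |B| / (8Δ³)`.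
-/

theorem Set.ncard_mul_le_ncard_of_pairwiseDisjoint {ι α : Type*} {s : Set ι} {t : Set α}
    {T : ι → Set α} {m : ℕ} (ht : t.Finite) (hT : ∀ i ∈ s, T i ⊆ t)
    (hd : s.PairwiseDisjoint T) (hm : ∀ i ∈ s, m ≤ (T i).ncard) : s.ncard * m ≤ t.ncard := by
  rcases s.finite_or_infinite with hs | hs
  · calc s.ncard * m ≤ ∑ i ∈ hs.toFinset, (T i).ncard := by
          rw [Set.ncard_eq_toFinset_card s hs, ← smul_eq_mul]
          exact Finset.card_nsmul_le_sum _ _ _ fun i hi => hm i (hs.mem_toFinset.mp hi)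
      _ = (⋃ i ∈ s, T i).ncard := by
          rw [hs.ncard_biUnion (fun i hi => ht.subset (hT i hi)) hd,
            finsum_mem_eq_finite_toFinset_sum _ hs]
      _ ≤ t.ncard := Set.ncard_le_ncard (Set.iUnion₂_subset hT) ht
  · simp [hs.ncard]

theorem three_mul_sqrt_le_of_rpow_le {Δ n : ℕ} (hΔ : 3 ^ 12 ≤ Δ)
    (h : (Δ : ℝ) ^ ((7 : ℝ) / 12) ≤ n) : 3 * Nat.sqrt Δ ≤ n := by
  have h7 : Δ ^ 7 ≤ n ^ 12 := by
    have h12 := pow_le_pow_left₀ (by positivity) h 12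
    rw [← Real.rpow_natCast, ← Real.rpow_mul (Nat.cast_nonneg _)] at h12
    norm_num at h12
    exact_mod_cast h12
  refine (Nat.pow_le_pow_iff_left (by norm_num : 12 ≠ 0)).mp ?_
  calc (3 * Nat.sqrt Δ) ^ 12 = 3 ^ 12 * (Nat.sqrt Δ * Nat.sqrt Δ) ^ 6 := by ring
    _ ≤ Δ * Δ ^ 6 := Nat.mul_le_mul hΔ (Nat.pow_le_pow_left (Nat.sqrt_le Δ) 6)
    _ = Δ ^ 7 := by ring
    _ ≤ n ^ 12 := h7

theorem two_mul_lt_two_mul_sqrt_mul_self {Δ : ℕ} (hΔ : 9 ≤ Δ) :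
    2 * Δ < 2 * Nat.sqrt Δ * (2 * Nat.sqrt Δ) := by
  have h3 : 3 ≤ Nat.sqrt Δ := Nat.le_sqrt.mpr hΔ
  have hlt := Nat.lt_succ_sqrt Δ
  nlinarith

theorem eight_mul_succ_pow_six_lt_two_pow {n : ℕ} (hn : 64 ≤ n) : 8 * (n + 1) ^ 6 < 2 ^ n := by
  induction n, hn using Nat.le_induction with
  | base => norm_num
  | succ n hn ih =>
    -- `((n + 2) / (n + 1))^6 ≤ (17 / 16)^6 < 2`
    have key : 16 ^ 6 * (n + 2) ^ 6 ≤ 16 ^ 6 * (2 * (n + 1) ^ 6) :=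
      calc 16 ^ 6 * (n + 2) ^ 6 = (16 * (n + 2)) ^ 6 := by ring
        _ ≤ (17 * (n + 1)) ^ 6 := Nat.pow_le_pow_left (by omega) 6
        _ = 17 ^ 6 * (n + 1) ^ 6 := by ring
        _ ≤ 2 * 16 ^ 6 * (n + 1) ^ 6 := Nat.mul_le_mul_right _ (by norm_num)
        _ = 16 ^ 6 * (2 * (n + 1) ^ 6) := by ring
    have := Nat.le_of_mul_le_mul_left key (by norm_num)
    rw [pow_succ 2 n, show n + 1 + 1 = n + 2 from rfl]
    omega

theorem eight_mul_pow_three_lt_two_pow_sqrt {Δ : ℕ} (hΔ : 2 ^ 12 ≤ Δ) :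
    8 * Δ ^ 3 < 2 ^ Nat.sqrt Δ :=
  calc 8 * Δ ^ 3 < 8 * ((Nat.sqrt Δ + 1) ^ 2) ^ 3 := by
        gcongr
        exact Nat.lt_succ_sqrt' Δ
    _ = 8 * (Nat.sqrt Δ + 1) ^ 6 := by ring
    _ < 2 ^ Nat.sqrt Δ := eight_mul_succ_pow_six_lt_two_pow (Nat.le_sqrt.mpr (by omega))

theorem mul_lt_of_mul_pow_le {b S D c k M : ℕ} (h : b * (c * c) ^ k ≤ S * D ^ k)
    (hc : 2 * D < c * c) (hM : M < 2 ^ k) (hD : 0 < D) (hS : 0 < S) : M * b < S := by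
  have hb : b * 2 ^ k ≤ S := by
    refine Nat.le_of_mul_le_mul_right ?_ (pow_pos hD k)
    calc b * 2 ^ k * D ^ k = b * (2 * D) ^ k := by ring
      _ ≤ b * (c * c) ^ k := by gcongr
      _ ≤ S * D ^ k := h
  rcases Nat.eq_zero_or_pos b with rfl | hb0
  · simpa using hS
  · calc M * b < 2 ^ k * b := Nat.mul_lt_mul_of_pos_right hM hb0
      _ = b * 2 ^ k := Nat.mul_comm _ _
      _ ≤ S := hb

namespace RandomCorr

variable {V : Type} {G : SimpleGraph V} (C : CorrAssignment G)

def availSet (φ : V → Option ℕ) (x : V) : Set ℕ :=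
  {c : ℕ | c ∈ C.L x ∧ ∀ v cv, φ v = some cv → ¬ C.M x c v cv}

theorem availCount_eq_ncard_availSet (φ : V → Option ℕ) (x : V) :
    availCount C φ x = (availSet C φ x).ncard := rfl

theorem finite_availSet (φ : V → Option ℕ) (x : V) : (availSet C φ x).Finite :=
  (C.L x).finite_toSet.subset fun _ hc => hc.1

theorem finite_setOf_isPartialColoring [Finite V] :
    {φ : V → Option ℕ | IsPartialColoring C φ}.Finite := by
  refine (Set.Finite.pi fun v => ((C.L v).finite_toSet.image some).insert none).subset ?_
  intro φ hφ v _
  rcases h : φ v with _ | c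
  · exact Set.mem_insert _ _
  · exact Set.mem_insert_of_mem _ ⟨c, hφ.1 v c h, rfl⟩

def availPairs (φ : V → Option ℕ) (X : Set V) : Set (V × ℕ) :=
  {p | p.1 ∈ X ∧ p.2 ∈ availSet C φ p.1}

theorem ncard_mul_le_ncard_availPairs [Finite V] {φ : V → Option ℕ} {X : Set V} {a : ℕ}
    (ha : ∀ x ∈ X, a ≤ availCount C φ x) : X.ncard * a ≤ (availPairs C φ X).ncard := by
  have hfin : (availPairs C φ X).Finite :=
    (Set.finite_univ.prod (Set.finite_iUnion fun v => (C.L v).finite_toSet)).subset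
      fun p hp => ⟨trivial, Set.mem_iUnion.mpr ⟨p.1, hp.2.1⟩⟩
  refine Set.ncard_mul_le_ncard_of_pairwiseDisjoint (T := fun x => {x} ×ˢ availSet C φ x)
    hfin (fun x hx p hp => ?_) (fun x _ y _ hxy => ?_) fun x hx => ?_
  · obtain ⟨rfl, hp⟩ := Set.mem_prod.mp hp
    exact ⟨hx, hp⟩
  · exact Set.disjoint_left.mpr fun p hpx hpy => hxy (hpx.1.symm.trans hpy.1)
  · rw [Set.ncard_prod, Set.ncard_singleton, one_mul, ← availCount_eq_ncard_availSet]
    exact ha x hx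

def recolorings (φ : V → Option ℕ) (X : Set V) (k : ℕ) : Set ((V → Option ℕ) × (Fin k → V)) :=
  {e | IsPartialColoring C e.1 ∧ (∀ i, e.2 i ∈ X) ∧ ∀ v ∉ Set.range e.2, e.1 v = φ v}

theorem finite_recolorings [Finite V] (φ : V → Option ℕ) (X : Set V) (k : ℕ) :
    (recolorings C φ X k).Finite :=
  ((finite_setOf_isPartialColoring C).prod Set.finite_univ).subset fun _ he => ⟨he.1, trivial⟩

section Update

variable [DecidableEq V]

theorem isPartialColoring_update {φ : V → Option ℕ} {x : V} {c : ℕ}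
    (hφ : IsPartialColoring C φ) (hc : c ∈ availSet C φ x) :
    IsPartialColoring C (Function.update φ x (some c)) := by
  have hval : ∀ v cv, Function.update φ x (some c) v = some cv →
      (v = x ∧ cv = c) ∨ (v ≠ x ∧ φ v = some cv) := by
    intro v cv hv
    rcases eq_or_ne v x with rfl | hvx
    · rw [Function.update_self, Option.some_inj] at hv
      exact Or.inl ⟨rfl, hv.symm⟩
    · rw [Function.update_of_ne hvx] at hv
      exact Or.inr ⟨hvx, hv⟩
  refine ⟨fun v cv hv => ?_, fun a b ca cb ha hb hM => ?_⟩
  · rcases hval v cv hv with ⟨rfl, rfl⟩ | ⟨_, h⟩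
    exacts [hc.1, hφ.1 v cv h]
  rcases hval a ca ha with ⟨rfl, rfl⟩ | ⟨-, hφa⟩ <;>
    rcases hval b cb hb with ⟨hbx, rfl⟩ | ⟨-, hφb⟩
  · exact G.loopless.irrefl _ (C.adj_of _ _ _ _ (hbx ▸ hM))
  · exact hc.2 b cb hφb hM
  · exact hc.2 a ca hφa (C.symm _ _ _ _ (hbx ▸ hM))
  · exact hφ.2 a b ca cb hφa hφb hM

/-- The only color that coloring `y` with `d` can make unavailable at `x` is the partner of
`(y, d)` in the matching. -/
theorem availCount_le_availCount_update_add_one (φ : V → Option ℕ) (x y : V) (d : ℕ) :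
    availCount C φ x ≤ availCount C (Function.update φ y (some d)) x + 1 := by
  have hlost : availSet C φ x \ availSet C (Function.update φ y (some d)) x ⊆
      {c | C.M x c y d} := by
    rintro c ⟨hc, hc'⟩
    by_contra hM
    refine hc' ⟨hc.1, fun v cv hv => ?_⟩
    rcases eq_or_ne v y with rfl | hvy
    · rw [Function.update_self, Option.some_inj] at hv
      exact hv ▸ hM
    · rw [Function.update_of_ne hvy] at hv
      exact hc.2 v cv hv
  have hpartner : ({c | C.M x c y d} : Set ℕ).ncard ≤ 1 :=
    (Set.ncard_le_one ((C.L x).finite_toSet.subset fun c hc => C.mem_left _ _ _ _ hc)).mpr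
      fun c hc c' hc' => C.matching y d x c c' (C.symm _ _ _ _ hc) (C.symm _ _ _ _ hc')
  have hlost_le := Set.ncard_le_ncard hlost
    ((C.L x).finite_toSet.subset fun c hc => C.mem_left _ _ _ _ hc)
  have := Set.ncard_le_ncard_sdiff_add_ncard (availSet C φ x)
    (availSet C (Function.update φ y (some d)) x) (finite_availSet C _ x)
  rw [availCount_eq_ncard_availSet, availCount_eq_ncard_availSet]
  omega

def recoloringsStartingWith (φ : V → Option ℕ) (X : Set V) (k : ℕ) (p : V × ℕ) :
    Set ((V → Option ℕ) × (Fin (k + 1) → V)) :=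
  Prod.map id (Fin.cons p.1) '' recolorings C (Function.update φ p.1 (some p.2)) (X \ {p.1}) k

theorem recoloringsStartingWith_subset {φ : V → Option ℕ} {X : Set V} {k : ℕ} {p : V × ℕ}
    (hp : p.1 ∈ X) : recoloringsStartingWith C φ X k p ⊆ recolorings C φ X (k + 1) := by
  rintro _ ⟨⟨ψ, w⟩, ⟨hψ, hw, hagree⟩, rfl⟩
  refine ⟨hψ, Fin.cases hp fun i => (hw i).1, fun v hv => ?_⟩
  simp only [Prod.map_apply, id_eq] at hv hagree ⊢
  rw [Fin.range_cons, Set.mem_insert_iff, not_or] at hv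
  rw [hagree v hv.2, Function.update_of_ne hv.1]

open Function in
theorem pairwise_disjoint_recoloringsStartingWith (φ : V → Option ℕ) (X : Set V) (k : ℕ) :
    Pairwise (Disjoint on recoloringsStartingWith C φ X k) := by
  have hself : ∀ x d e, e ∈ recolorings C (Function.update φ x (some d)) (X \ {x}) k →
      e.1 x = some d := fun x d e he => by
    rw [he.2.2 x fun ⟨i, hi⟩ => (he.2.1 i).2 hi, Function.update_self]
  rintro ⟨x, d⟩ ⟨x', d'⟩ hne
  refine Set.disjoint_left.mpr ?_
  rintro _ ⟨e, he, rfl⟩ ⟨e', he', heq⟩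
  obtain ⟨hψ, hw⟩ := Prod.mk.inj heq
  obtain rfl : x' = x := (Fin.cons_inj.mp hw).1
  have hd : some d' = some d := by
    rw [← hself _ _ _ he', ← hself _ _ _ he, show e'.1 = e.1 from hψ]
  exact hne (Prod.ext rfl (Option.some_inj.mp hd).symm)

theorem ncard_recoloringsStartingWith (φ : V → Option ℕ) (X : Set V) (k : ℕ) (p : V × ℕ) :
    (recoloringsStartingWith C φ X k p).ncard =
      (recolorings C (Function.update φ p.1 (some p.2)) (X \ {p.1}) k).ncard :=
  Set.ncard_image_of_injective _
    (Function.injective_id.prodMap (Fin.cons_right_injective (α := fun _ => V) p.1))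

end Update

theorem pow_le_ncard_recolorings [Finite V] {c : ℕ} :
    ∀ {k : ℕ} {φ : V → Option ℕ} {X : Set V}, IsPartialColoring C φ → c + k ≤ X.ncard →
      (∀ x ∈ X, c + k ≤ availCount C φ x) → (c * c) ^ k ≤ (recolorings C φ X k).ncard
  | 0, φ, X, hφ, _, _ => by
    rw [pow_zero]
    exact (Set.ncard_pos (finite_recolorings C φ X 0)).mpr
      ⟨(φ, Fin.elim0), hφ, fun i => i.elim0, fun _ _ => rfl⟩
  | k + 1, φ, X, hφ, hX, havail => by
    classical
    have hstep : ∀ p ∈ availPairs C φ X,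
        (c * c) ^ k ≤ (recoloringsStartingWith C φ X k p).ncard := by
      rintro ⟨x, d⟩ ⟨hx, hd⟩
      rw [ncard_recoloringsStartingWith]
      refine pow_le_ncard_recolorings (isPartialColoring_update C hφ hd) ?_ fun y hy => ?_
      · rw [Set.ncard_sdiff_singleton_of_mem hx]
        omega
      · have hlost := availCount_le_availCount_update_add_one C φ y x d
        have hy := havail y hy.1
        dsimp only at hlost hy ⊢
        omega
    calc (c * c) ^ (k + 1) = c * c * (c * c) ^ k := pow_succ' _ _
      _ ≤ X.ncard * c * (c * c) ^ k := by gcongr; omega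
      _ ≤ (availPairs C φ X).ncard * (c * c) ^ k := by
        gcongr
        exact ncard_mul_le_ncard_availPairs C fun x hx => (by omega : c ≤ c + (k + 1)).trans
          (havail x hx)
      _ ≤ (recolorings C φ X (k + 1)).ncard :=
        Set.ncard_mul_le_ncard_of_pairwiseDisjoint (finite_recolorings C φ X (k + 1))
          (fun p hp => recoloringsStartingWith_subset C hp.1)
          ((pairwise_disjoint_recoloringsStartingWith C φ X k).set_pairwise _) hstep

def coloringsAgreeingOff (u : V) (φ₀ : V → Option ℕ) : Set (V → Option ℕ) :=
  {φ | IsPartialColoring C φ ∧ ∀ v, ¬(v = u ∨ G.Adj u v) → φ v = φ₀ v}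

def richNbrs (u : V) (a : ℕ) (φ : V → Option ℕ) : Set V :=
  {x | G.Adj u x ∧ φ x = none ∧ a ≤ availCount C φ x}

theorem ncard_mul_pow_le_ncard_mul_pow [Finite V] (u : V) (φ₀ : V → Option ℕ) {a c k : ℕ}
    (hck : c + k ≤ a) :
    {φ ∈ coloringsAgreeingOff C u φ₀ | a ≤ (richNbrs C u a φ).ncard}.ncard * (c * c) ^ k ≤
      (coloringsAgreeingOff C u φ₀).ncard * (G.neighborSet u).ncard ^ k := by
  set B := coloringsAgreeingOff C u φ₀
  have hBfin : B.Finite := (finite_setOf_isPartialColoring C).subset fun _ h => h.1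
  calc _ ≤ (B ×ˢ Set.univ.pi fun _ : Fin k => G.neighborSet u).ncard := by
        refine Set.ncard_mul_le_ncard_of_pairwiseDisjoint
          (T := fun φ => recolorings C φ (richNbrs C u a φ) k)
          (hBfin.prod (Set.Finite.pi fun _ => Set.toFinite _)) ?_ ?_
          fun φ hφ => pow_le_ncard_recolorings C hφ.1.1 (hck.trans hφ.2)
            fun x hx => hck.trans hx.2.2
        · rintro φ ⟨⟨-, hφ₀⟩, -⟩ ⟨ψ, w⟩ ⟨hψ, hw, hagree⟩
          have hwu : ∀ i, G.Adj u (w i) := fun i => (hw i).1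
          refine ⟨⟨hψ, fun v hv => ?_⟩, fun i _ => hwu i⟩
          rw [hagree v ?_, hφ₀ v hv]
          rintro ⟨i, rfl⟩
          exact hv (Or.inr (hwu i))
        -- `φ` is `ψ` with the vertices of `w` uncolored
        · rintro φ - φ' - hne
          refine Set.disjoint_left.mpr fun ⟨ψ, w⟩ ⟨_, hw, hagree⟩ ⟨_, hw', hagree'⟩ =>
            hne (funext fun v => ?_)
          by_cases hv : v ∈ Set.range w
          · obtain ⟨i, rfl⟩ := hv
            rw [(hw i).2.1, (hw' i).2.1]
          · rw [← hagree v hv, hagree' v hv]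
    _ = B.ncard * (G.neighborSet u).ncard ^ k := by
        rw [Set.ncard_prod, ← Nat.card_coe_set_eq (Set.pi _ _), Nat.card_congr (Equiv.Set.univPi _),
          Nat.card_pi, Finset.prod_const, Finset.card_univ, Fintype.card_fin, Nat.card_coe_set_eq]

theorem eventB_subset_many_richNbrs [Finite V] {Δ : ℕ} (hΔ : 3 ^ 12 ≤ Δ) (u : V)
    (φ₀ : V → Option ℕ) :
    {φ : V → Option ℕ | IsPartialColoring C φ ∧ (∀ v : V, ¬(v = u ∨ G.Adj u v) → φ v = φ₀ v) ∧
      (Δ : ℝ) ^ ((7 : ℝ) / 12) ≤ ({x : V | G.Adj u x ∧ φ x = none ∧ ¬ EventA C Δ x φ}.ncard : ℝ)} ⊆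
      {φ ∈ coloringsAgreeingOff C u φ₀ |
        3 * Nat.sqrt Δ ≤ (richNbrs C u (3 * Nat.sqrt Δ) φ).ncard} := by
  rintro φ ⟨hφ, hagree, hgood⟩
  have hsub : {x | G.Adj u x ∧ φ x = none ∧ ¬ EventA C Δ x φ} ⊆
      richNbrs C u (3 * Nat.sqrt Δ) φ := fun x ⟨hadj, hnone, hA⟩ =>
    ⟨hadj, hnone, three_mul_sqrt_le_of_rpow_le hΔ (not_lt.mp fun h => hA ⟨hnone, h⟩)⟩
  exact ⟨⟨hφ, hagree⟩, (three_mul_sqrt_le_of_rpow_le hΔ hgood).trans (Set.ncard_le_ncard hsub)⟩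

theorem ncard_neighborSet_le_maxDeg [Fintype V] (G : SimpleGraph V) (u : V) :
    (G.neighborSet u).ncard ≤ maxDeg G :=
  Finset.le_sup (f := fun v => (G.neighborSet v).ncard) (Finset.mem_univ u)

end RandomCorr

open RandomCorr

/-- The conditional probability given that the restriction of `φ` to `G − N[u]` equals `φ₀`
is expressed as a ratio of counts: `Pr[B_u | ·] < 1/(8Δ³)` becomes `8Δ³·|B_u ∩ B| < |B|`, where
`B` is the conditioning event; `φ₀` is a partial coloring of `G − N[u]`, encoded as a partial
coloring of `G` undefined on `N[u]`. -/
theorem eventB_unlikely_conditional :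
    ∃ Δ₀ : ℕ, ∀ Δ : ℕ, Δ₀ ≤ Δ →
      ∀ (V : Type) [Fintype V] (G : SimpleGraph V)
        (C : RandomCorr.CorrAssignment G) (u : V),
        RandomCorr.maxDeg G = Δ →
        ∀ φ₀ : V → Option ℕ,
          RandomCorr.IsPartialColoring C φ₀ →
          (∀ v : V, v = u ∨ G.Adj u v → φ₀ v = none) →
          8 * Δ ^ 3 *
            Set.ncard {φ : V → Option ℕ | RandomCorr.IsPartialColoring C φ ∧
              (∀ v : V, ¬(v = u ∨ G.Adj u v) → φ v = φ₀ v) ∧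
              (Δ : ℝ) ^ ((7 : ℝ)/12) ≤
                (Set.ncard {x : V | G.Adj u x ∧ φ x = none ∧
                  ¬ RandomCorr.EventA C Δ x φ} : ℝ)} <
          Set.ncard {φ : V → Option ℕ | RandomCorr.IsPartialColoring C φ ∧
            (∀ v : V, ¬(v = u ∨ G.Adj u v) → φ v = φ₀ v)} := by
  refine ⟨3 ^ 12, fun Δ hΔ V _ G C u hmax φ₀ hφ₀ _ => ?_⟩
  set s := Nat.sqrt Δ
  have hfin := finite_setOf_isPartialColoring C
  have hpos : 0 < (coloringsAgreeingOff C u φ₀).ncard :=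
    (Set.ncard_pos (hfin.subset fun _ h => h.1)).mpr ⟨φ₀, hφ₀, fun _ _ => rfl⟩
  refine mul_lt_of_mul_pow_le (D := Δ) (c := 2 * s) (k := s) ?_
    (two_mul_lt_two_mul_sqrt_mul_self (by omega))
    (eight_mul_pow_three_lt_two_pow_sqrt (by omega)) (by omega) hpos
  calc _ ≤ _ := Nat.mul_le_mul_right _ (Set.ncard_le_ncard (eventB_subset_many_richNbrs C hΔ u φ₀)
        (hfin.subset fun _ h => h.1.1))
    _ ≤ _ := ncard_mul_pow_le_ncard_mul_pow C u φ₀ (by omega)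
    _ ≤ _ := Nat.mul_le_mul_left _
      (Nat.pow_le_pow_left (hmax ▸ ncard_neighborSet_le_maxDeg G u) s)
end
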